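/- arXiv:1407.3164 — 16 statements merged into one kernel-verified Lean document; each statement's English description precedes it below -/
import Mathlib

section
/- Let R be an equivalence relation with the relaxed square property on the edge set of a connected graph G. Then every vertex of G is incident to at least one edge of each equivalence class of R, and hence the number of equivalence classes of R is at most the minimum degree of G. -/
open SimpleGraph

variable {V : Type*}

/-- An equivalence relation on a set `E` of edges: reflexive on `E`, symmetric, transitive,
and only relating elements of `E`. -/
structure IsEquivOn (R : Sym2 V → Sym2 V → Prop) (E : Set (Sym2 V)) : Prop where
  refl : ∀ e ∈ E, R e e
  symm : ∀ {e f}, R e f → R f e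
  trans : ∀ {e f g}, R e f → R f g → R e g
  mem_left : ∀ {e f}, R e f → e ∈ E
  mem_right : ∀ {e f}, R e f → f ∈ E

/-- `R` is an RSP-relation on `G`: an equivalence relation on `E(G)` such that any two adjacent
edges in distinct classes span a square (4-cycle) with opposite edges in the same class. -/
def IsRSP (G : SimpleGraph V) (R : Sym2 V → Sym2 V → Prop) : Prop :=
  IsEquivOn R G.edgeSet ∧
  ∀ x y z : V, G.Adj x y → G.Adj x z → y ≠ z → ¬ R s(x, y) s(x, z) →
    ∃ w : V, w ≠ x ∧ w ≠ y ∧ w ≠ z ∧ G.Adj y w ∧ G.Adj z w ∧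
      R s(x, y) s(z, w) ∧ R s(x, z) s(y, w)

/-- A finest RSP-relation: an RSP-relation such that every finer RSP-relation coincides
with it. -/
def IsFinestRSP (G : SimpleGraph V) (R : Sym2 V → Sym2 V → Prop) : Prop :=
  IsRSP G R ∧ ∀ S : Sym2 V → Sym2 V → Prop, IsRSP G S →
    (∀ e f, S e f → R e f) → (∀ e f, R e f → S e f)

/-!
If the class of `e` contains an edge `vw` and `u` is a neighbour of `v`, it also contains an
edge at `u`: either `u = w`, or `vu` is itself in the class, or the relaxed square spanned by
`vu` and `vw` supplies an edge at `u` opposite to `vw`. Walking along a path spreads the class to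
every vertex, so at any vertex `v` the map sending a neighbour `w` to the class of `vw` is onto
the set of classes.
-/

namespace IsEquivOn

variable {R : Sym2 V → Sym2 V → Prop} {E : Set (Sym2 V)}

lemma setOf_eq_of_rel (hR : IsEquivOn R E) {e f : Sym2 V} (h : R e f) :
    {g | R e g} = {g | R f g} :=
  Set.ext fun _ => ⟨hR.trans (hR.symm h), hR.trans h⟩

lemma ncard_classes_le_degree {G : SimpleGraph V} (hR : IsEquivOn R G.edgeSet) {v : V}
    [Fintype (G.neighborSet v)] (hv : ∀ e ∈ G.edgeSet, ∃ f ∈ G.edgeSet, R e f ∧ v ∈ f) :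
    {C : Set (Sym2 V) | ∃ e ∈ G.edgeSet, C = {f | R e f}}.ncard ≤ G.degree v := by
  have hsub : {C : Set (Sym2 V) | ∃ e ∈ G.edgeSet, C = {f | R e f}} ⊆
      (fun w => {g | R s(v, w) g}) '' G.neighborSet v := by
    rintro C ⟨e, he, rfl⟩
    obtain ⟨f, hf, hef, hvf⟩ := hv e he
    obtain ⟨w, rfl⟩ := Sym2.mem_iff_exists.mp hvf
    exact ⟨w, hf, (hR.setOf_eq_of_rel hef).symm⟩
  calc _ ≤ ((fun w => {g | R s(v, w) g}) '' G.neighborSet v).ncard :=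
        Set.ncard_le_ncard hsub (Set.toFinite _)
    _ ≤ (G.neighborSet v).ncard := Set.ncard_image_le (Set.toFinite _)
    _ = G.degree v := by
        rw [Set.ncard_eq_toFinset_card', ← neighborFinset_def, card_neighborFinset_eq_degree]

end IsEquivOn

namespace IsRSP

variable {G : SimpleGraph V} {R : Sym2 V → Sym2 V → Prop} {e : Sym2 V}

lemma exists_rel_mem_of_adj (hR : IsRSP G R) {v u : V} (hvu : G.Adj v u)
    (hv : ∃ f ∈ G.edgeSet, R e f ∧ v ∈ f) : ∃ f ∈ G.edgeSet, R e f ∧ u ∈ f := by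
  obtain ⟨f, hf, hef, hvf⟩ := hv
  obtain ⟨w, rfl⟩ := Sym2.mem_iff_exists.mp hvf
  by_cases huw : u = w
  · exact ⟨s(v, w), hf, hef, by simp [huw]⟩
  by_cases hclass : R s(v, u) s(v, w)
  · exact ⟨s(v, u), hvu, hR.1.trans hef (hR.1.symm hclass), by simp⟩
  obtain ⟨x, -, -, -, hux, -, -, hwux⟩ := hR.2 v u w hvu hf huw hclass
  exact ⟨s(u, x), hux, hR.1.trans hef hwux, by simp⟩

lemma exists_rel_mem_of_reachable (hR : IsRSP G R) {v u : V} (hvu : G.Reachable v u)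
    (hv : ∃ f ∈ G.edgeSet, R e f ∧ v ∈ f) : ∃ f ∈ G.edgeSet, R e f ∧ u ∈ f := by
  obtain ⟨p⟩ := hvu
  induction p with
  | nil => exact hv
  | cons h _ ih => exact ih (hR.exists_rel_mem_of_adj h hv)

lemma exists_rel_mem_of_connected (hR : IsRSP G R) (hG : G.Connected) (he : e ∈ G.edgeSet)
    (v : V) : ∃ f ∈ G.edgeSet, R e f ∧ v ∈ f :=
  hR.exists_rel_mem_of_reachable (hG.preconnected e.out.1 v)
    ⟨e, he, hR.1.refl e he, Sym2.out_fst_mem e⟩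

end IsRSP

/-- Every vertex of a connected graph with an RSP-relation `R` is incident to at least one
edge of each `R`-class, hence the number of `R`-classes is at most the minimum degree. -/
theorem stmt0 [Fintype V] (G : SimpleGraph V) [DecidableRel G.Adj]
    (hG : G.Connected) (R : Sym2 V → Sym2 V → Prop) (hR : IsRSP G R) :
    (∀ (v : V) (e : Sym2 V), e ∈ G.edgeSet → ∃ f ∈ G.edgeSet, R e f ∧ v ∈ f) ∧
    (∀ v : V,
      ({C : Set (Sym2 V) | ∃ e ∈ G.edgeSet, C = {f | R e f}}).ncard ≤ G.degree v) := by
  have hmeets : ∀ (v : V) (e : Sym2 V), e ∈ G.edgeSet → ∃ f ∈ G.edgeSet, R e f ∧ v ∈ f :=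
    fun v _ he => hR.exists_rel_mem_of_connected hG he v
  exact ⟨hmeets, fun v => hR.1.ncard_classes_le_degree (hmeets v)⟩
end

section
/- Let R be an RSP-relation on the edge set E of a connected graph G = (V,E), let φ be an equivalence class of R, and let S be the equivalence relation on E \ φ (the edge set of the spanning subgraph G' = (V, E \ φ)) whose classes are exactly the classes of R other than φ. Then S is an RSP-relation on G'. -/
open SimpleGraph

variable {V : Type*}

/-- Deleting an equivalence class `φ` of an RSP-relation `R` from a connected graph `G`
yields a spanning subgraph on which the remaining classes form an RSP-relation. -/
theorem stmt2 (G : SimpleGraph V) (hG : G.Connected)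
    (R : Sym2 V → Sym2 V → Prop) (hR : IsRSP G R)
    (e₀ : Sym2 V) (he₀ : e₀ ∈ G.edgeSet) :
    IsRSP (G.deleteEdges {e | R e₀ e}) (fun e f => R e f ∧ ¬ R e₀ e ∧ ¬ R e₀ f) := by
  obtain ⟨hEq, hSq⟩ := hR
  constructor
  · constructor
    · intro e he
      rw [SimpleGraph.edgeSet_deleteEdges] at he
      exact ⟨hEq.refl e he.1, he.2, he.2⟩
    · intro e f h
      exact ⟨hEq.symm h.1, h.2.2, h.2.1⟩
    · intro e f g h1 h2
      exact ⟨hEq.trans h1.1 h2.1, h1.2.1, h2.2.2⟩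
    · intro e f h
      rw [SimpleGraph.edgeSet_deleteEdges]
      exact ⟨hEq.mem_left h.1, h.2.1⟩
    · intro e f h
      rw [SimpleGraph.edgeSet_deleteEdges]
      exact ⟨hEq.mem_right h.1, h.2.2⟩
  · intro x y z hxy hxz hyz hns
    rw [SimpleGraph.deleteEdges_adj] at hxy hxz
    obtain ⟨hxy, hxyφ⟩ := hxy
    obtain ⟨hxz, hxzφ⟩ := hxz
    have hnr : ¬ R s(x, y) s(x, z) := fun h => hns ⟨h, hxyφ, hxzφ⟩
    obtain ⟨w, hwx, hwy, hwz, hyw, hzw, h1, h2⟩ := hSq x y z hxy hxz hyz hnr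
    have hzwφ : ¬ R e₀ s(z, w) := fun h => hxyφ (hEq.trans h (hEq.symm h1))
    have hywφ : ¬ R e₀ s(y, w) := fun h => hxzφ (hEq.trans h (hEq.symm h2))
    exact ⟨w, hwx, hwy, hwz,
      SimpleGraph.deleteEdges_adj.mpr ⟨hyw, hywφ⟩,
      SimpleGraph.deleteEdges_adj.mpr ⟨hzw, hzwφ⟩,
      ⟨h1, hxyφ, hzwφ⟩, ⟨h2, hxzφ, hywφ⟩⟩
end

section
/- Let G be a connected K_{2,3}-free graph. An equivalence relation R on E(G) has the relaxed square property if and only if δ₀ ⊆ R, where δ₀ is the relation relating two edges e, f when e and f are opposite edges of a square, or e and f are adjacent with no square containing both, or e = f. -/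
open SimpleGraph

variable {V : Type*}

/-- `a-b-c-d` is a square (4-cycle on distinct vertices) in `G`. -/
def SquareIn (G : SimpleGraph V) (a b c d : V) : Prop :=
  a ≠ c ∧ b ≠ d ∧ G.Adj a b ∧ G.Adj b c ∧ G.Adj c d ∧ G.Adj d a

/-- `e` and `f` are opposite edges of some square of `G`. -/
def OppSq (G : SimpleGraph V) (e f : Sym2 V) : Prop :=
  ∃ a b c d : V, SquareIn G a b c d ∧ e = s(a, b) ∧ f = s(c, d)

/-- The relation `τ`: `e = [x,z]` and `f = [z,y]` with `z` the unique common neighbor of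
`x` and `y` (equivalently: adjacent edges lying on no common square). -/
def TauRel (G : SimpleGraph V) (e f : Sym2 V) : Prop :=
  ∃ x z y : V, e = s(x, z) ∧ f = s(z, y) ∧ G.Adj x z ∧ G.Adj z y ∧ x ≠ y ∧
    ∀ w : V, G.Adj x w → G.Adj y w → w = z

/-- The relation `δ₀`. -/
def Delta0 (G : SimpleGraph V) (e f : Sym2 V) : Prop :=
  OppSq G e f ∨ TauRel G e f ∨ (e = f ∧ e ∈ G.edgeSet)

/-- `G` contains no subgraph isomorphic to `K_{2,3}`. -/
def K23Free (G : SimpleGraph V) : Prop :=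
  ¬ ∃ x y a b c : V, x ≠ y ∧ a ≠ b ∧ a ≠ c ∧ b ≠ c ∧
    G.Adj x a ∧ G.Adj x b ∧ G.Adj x c ∧ G.Adj y a ∧ G.Adj y b ∧ G.Adj y c

/-- The square `a-b-c-d` is contained in some `K_{2,3}`-subgraph of `G`. -/
def SquareInK23 (G : SimpleGraph V) (a b c d : V) : Prop :=
  (∃ w : V, w ≠ b ∧ w ≠ d ∧ G.Adj a w ∧ G.Adj c w) ∨
  (∃ w : V, w ≠ a ∧ w ≠ c ∧ G.Adj b w ∧ G.Adj d w)

/-- The relation `δ₁`: equal edges, or opposite edges of a square not contained in any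
`K_{2,3}`-subgraph. -/
def Delta1 (G : SimpleGraph V) (e f : Sym2 V) : Prop :=
  (e = f ∧ e ∈ G.edgeSet) ∨
  ∃ a b c d : V, SquareIn G a b c d ∧ ¬ SquareInK23 G a b c d ∧ e = s(a, b) ∧ f = s(c, d)

/-- For a connected `K_{2,3}`-free graph, an equivalence relation on `E(G)` has the relaxed
square property iff it contains `δ₀`. -/
theorem stmt3 (G : SimpleGraph V) (hG : G.Connected) (hfree : K23Free G)
    (R : Sym2 V → Sym2 V → Prop) (hequiv : IsEquivOn R G.edgeSet) :
    IsRSP G R ↔ ∀ e f, Delta0 G e f → R e f := by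
  constructor
  · rintro ⟨heq, hrsp⟩ e f hd
    rcases hd with ⟨a, b, c, d, ⟨hac, hbd, hab, hbc, hcd, hda⟩, he, hf⟩ | htau | ⟨rfl, hmem⟩
    · subst he; subst hf
      -- step 1: R s(a,b) s(b,c) or R s(a,b) s(c,d)
      have step1 : R s(a,b) s(b,c) ∨ R s(a,b) s(c,d) := by
        by_cases hR1 : R s(b,a) s(b,c)
        · left; rwa [Sym2.eq_swap] at hR1
        · obtain ⟨w, hwb, hwa, hwc, haw, hcw, hR2, hR3⟩ :=
            hrsp b a c hab.symm hbc hac hR1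
          by_cases hwd : w = d
          · subst hwd; right; rwa [Sym2.eq_swap] at hR2
          · exact absurd ⟨a, c, b, d, w, hac, hbd, hwb.symm,
              fun h => hwd h.symm, hab, hda.symm, haw, hbc.symm, hcd, hcw⟩ hfree
      rcases step1 with hR | hR
      · -- step 2
        by_cases hR1 : R s(c,b) s(c,d)
        · rw [Sym2.eq_swap] at hR1; exact heq.trans hR hR1
        · obtain ⟨w, hwc, hwb, hwd, hbw, hdw, hR2, hR3⟩ :=
            hrsp c b d hbc.symm hcd hbd hR1
          by_cases hwa : w = a
          · subst hwa
            rw [show s(b,w) = s(w,b) from Sym2.eq_swap] at hR3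
            exact heq.symm hR3
          · exact absurd ⟨b, d, a, c, w, hbd, hac, fun h => hwa h.symm,
              hwc.symm, hab.symm, hbc, hbw, hda, hcd.symm, hdw⟩ hfree
      · exact hR
    · obtain ⟨x, z, y, he, hf, hxz, hzy, hxy, huniq⟩ := htau
      subst he; subst hf
      by_contra hR
      have : ¬ R s(z,x) s(z,y) := by rwa [Sym2.eq_swap] at hR
      obtain ⟨w, hwz, hwx, hwy, hxw, hyw, _, _⟩ :=
        hrsp z x y hxz.symm hzy hxy this
      exact hwz (huniq w hxw hyw) |>.elim
    · exact hequiv.refl e hmem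
  · intro hd
    refine ⟨hequiv, fun x y z hxy hxz hyz hR => ?_⟩
    -- if x were the unique common neighbor of y,z we'd have τ hence R
    have : ¬ ∀ w : V, G.Adj y w → G.Adj z w → w = x := by
      intro huniq
      exact hR (by
        have := hd s(y,x) s(x,z)
          (Or.inr (Or.inl ⟨y, x, z, rfl, rfl, hxy.symm, hxz, hyz, huniq⟩))
        rwa [Sym2.eq_swap] at this)
    push_neg at this
    obtain ⟨w, hyw, hzw, hwx⟩ := this
    refine ⟨w, hwx, hyw.ne', hzw.ne', hyw, hzw, ?_, ?_⟩
    · exact hd _ _ (Or.inl ⟨x, y, w, z, ⟨fun h => hwx h.symm, hyz, hxy, hyw,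
        hzw.symm, hxz.symm⟩, rfl, Sym2.eq_swap⟩)
    · exact hd _ _ (Or.inl ⟨x, z, w, y, ⟨fun h => hwx h.symm, hyz.symm, hxz, hzw,
        hyw.symm, hxy.symm⟩, rfl, Sym2.eq_swap⟩)
end

section
/- Let G be an arbitrary connected graph and R a finest RSP-relation on E(G). Then (τ ∪ δ₁)* ⊆ R ⊆ δ₀*, where * denotes transitive (equivalence) closure. Moreover, if G is K_{2,3}-free, then (τ ∪ δ₁)* = R = δ₀*. -/
/-!
The RSP square condition forces `τ`- and `δ₁`-related edges into one class: if they were in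
different classes, it would supply a square that contradicts the uniqueness of the common
neighbour, respectively that puts the `δ₁`-square into a `K_{2,3}`. For the upper bound,
`R ∩ δ₀*` is again an RSP-relation: whenever two adjacent edges are `R`-related but not
`δ₀*`-related, they have a second common neighbour, and chasing the RSP squares at its corners
yields a square with opposite edges `R`-related. Finestness then gives `R ⊆ δ₀*`. In a
`K_{2,3}`-free graph no square lies in a `K_{2,3}`, so `δ₀ ⊆ τ ∪ δ₁`.
-/

open SimpleGraph

variable {V : Type*}

open Relation

variable {G : SimpleGraph V} {R : Sym2 V → Sym2 V → Prop} {a b c d x y z w : V}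

lemma SquareIn.delta0 (h : SquareIn G a b c d) : Delta0 G s(a, b) s(c, d) :=
  Or.inl ⟨a, b, c, d, h, rfl, rfl⟩

lemma SquareIn.rev (h : SquareIn G a b c d) : SquareIn G c d a b :=
  ⟨h.1.symm, h.2.1.symm, h.2.2.2.2.1, h.2.2.2.2.2, h.2.2.1, h.2.2.2.1⟩

instance : Std.Symm (Delta0 G) where
  symm e f := by
    rintro (⟨a, b, c, d, hsq, rfl, rfl⟩ | ⟨x, z, y, rfl, rfl, hxz, hzy, hxy, huniq⟩ | ⟨rfl, he⟩)
    · exact hsq.rev.delta0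
    · exact Or.inr <| Or.inl ⟨y, z, x, Sym2.eq_swap, Sym2.eq_swap, hzy.symm, hxz.symm, hxy.symm,
        fun w hyw hxw => huniq w hxw hyw⟩
    · exact Or.inr <| Or.inr ⟨rfl, he⟩

lemma delta0_opposite_edges (hxy : G.Adj x y) (hxz : G.Adj x z) (hyz : y ≠ z) (hwx : w ≠ x)
    (hyw : G.Adj y w) (hzw : G.Adj z w) :
    Delta0 G s(x, y) s(z, w) ∧ Delta0 G s(x, z) s(y, w) := by
  constructor
  · rw [Sym2.eq_swap (a := z)]
    exact SquareIn.delta0 ⟨hwx.symm, hyz, hxy, hyw, hzw.symm, hxz.symm⟩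
  · rw [Sym2.eq_swap (a := y)]
    exact SquareIn.delta0 ⟨hwx.symm, hyz.symm, hxz, hzw, hyw.symm, hxy.symm⟩

lemma exists_common_neighbor_of_not_delta0 (hxy : G.Adj x y) (hxz : G.Adj x z) (hyz : y ≠ z)
    (hΔ : ¬ Delta0 G s(x, y) s(x, z)) : ∃ w, w ≠ x ∧ G.Adj y w ∧ G.Adj z w := by
  by_contra! h
  refine hΔ <| Or.inr <| Or.inl ⟨y, x, z, Sym2.eq_swap, rfl, hxy.symm, hxz, hyz, ?_⟩
  intro w hyw hzw
  by_contra hwx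
  exact h w hwx hyw hzw

lemma IsEquivOn.inf {E : Set (Sym2 V)} {S : Sym2 V → Sym2 V → Prop} [Std.Symm S] [IsTrans _ S]
    (hR : IsEquivOn R E) (hS : ∀ e ∈ E, S e e) : IsEquivOn (fun e f => R e f ∧ S e f) E where
  refl e he := ⟨hR.refl e he, hS e he⟩
  symm h := ⟨hR.symm h.1, _root_.symm h.2⟩
  trans h h' := ⟨hR.trans h.1 h'.1, _root_.trans h.2 h'.2⟩
  mem_left h := hR.mem_left h.1
  mem_right h := hR.mem_right h.1

namespace IsRSP

lemma rel_of_tauRel (hR : IsRSP G R) {e f : Sym2 V} (h : TauRel G e f) : R e f := by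
  obtain ⟨x, z, y, rfl, rfl, hxz, hzy, hxy, huniq⟩ := h
  rw [Sym2.eq_swap]
  by_contra hn
  obtain ⟨w, hwz, -, -, hxw, hyw, -⟩ := hR.2 z x y hxz.symm hzy hxy hn
  exact hwz (huniq w hxw hyw)

lemma rel_of_unique_fourth_vertex (hR : IsRSP G R) (hba : G.Adj b a) (hbc : G.Adj b c)
    (hac : a ≠ c) (huniq : ∀ w, w ≠ b → G.Adj a w → G.Adj c w → w = d)
    (h : ¬ R s(b, a) s(b, c)) : R s(b, a) s(c, d) ∧ R s(b, c) s(a, d) := by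
  obtain ⟨w, hwb, -, -, haw, hcw, h1, h2⟩ := hR.2 b a c hba hbc hac h
  obtain rfl := huniq w hwb haw hcw
  exact ⟨h1, h2⟩

lemma rel_of_delta1 (hR : IsRSP G R) {e f : Sym2 V} (h : Delta1 G e f) : R e f := by
  rcases h with ⟨rfl, he⟩ | ⟨a, b, c, d, ⟨hac, hbd, hab, hbc, hcd, hda⟩, hK, rfl, rfl⟩
  · exact hR.1.refl _ he
  have huniq_d : ∀ w, w ≠ b → G.Adj a w → G.Adj c w → w = d := fun w hwb haw hcw =>
    by_contra fun hwd => hK (Or.inl ⟨w, hwb, hwd, haw, hcw⟩)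
  have huniq_a : ∀ w, w ≠ c → G.Adj b w → G.Adj d w → w = a := fun w hwc hbw hdw =>
    by_contra fun hwa => hK (Or.inr ⟨w, hwa, hwc, hbw, hdw⟩)
  by_cases hb : R s(b, a) s(b, c)
  · by_cases hc : R s(c, b) s(c, d)
    · rw [Sym2.eq_swap (a := a)]
      exact hR.1.trans hb (Sym2.eq_swap (a := b) ▸ hc)
    · have := (hR.rel_of_unique_fourth_vertex hbc.symm hcd hbd huniq_a hc).2
      rw [Sym2.eq_swap (a := b) (b := a)] at this
      exact hR.1.symm this
  · have := (hR.rel_of_unique_fourth_vertex hab.symm hbc hac huniq_d hb).1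
    rwa [Sym2.eq_swap (a := b)] at this

lemma transGen_le (hR : IsRSP G R) :
    TransGen (fun e f => TauRel G e f ∨ Delta1 G e f) ≤ R := by
  have : IsTrans _ R := ⟨fun _ _ _ => hR.1.trans⟩
  exact transGen_minimal fun _ _ h => h.elim hR.rel_of_tauRel hR.rel_of_delta1

-- If `y-x` and `y-w` lie in different classes, the square they span has fourth vertex `z`:
-- any other fourth vertex `u` would make `u-w` `δ₀`-opposite to both `x-y` and `x-z`.
lemma rel_or_rel_of_not_transGen (hR : IsRSP G R) (hxy : G.Adj x y) (hxz : G.Adj x z)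
    (hwx : w ≠ x) (hyw : G.Adj y w) (hzw : G.Adj z w)
    (hΔ : ¬ TransGen (Delta0 G) s(x, y) s(x, z)) :
    R s(x, y) s(y, w) ∨ (R s(x, y) s(z, w) ∧ R s(x, z) s(y, w)) := by
  by_cases h : R s(y, x) s(y, w)
  · exact Or.inl (Sym2.eq_swap (a := y) ▸ h)
  obtain ⟨u, huy, -, -, hxu, hwu, h1, h2⟩ := hR.2 y x w hxy.symm hyw hwx.symm h
  obtain rfl : u = z := by
    by_contra huz
    have d1 : Delta0 G s(y, x) s(u, w) :=
      SquareIn.delta0 ⟨huy.symm, hwx.symm, hxy.symm, hxu, hwu.symm, hyw.symm⟩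
    have d2 : Delta0 G s(z, x) s(u, w) :=
      SquareIn.delta0 ⟨Ne.symm huz, hwx.symm, hxz.symm, hxu, hwu.symm, hzw.symm⟩
    rw [Sym2.eq_swap (a := x) (b := y), Sym2.eq_swap (a := x) (b := z)] at hΔ
    exact hΔ (.tail (.single d1) (symm d2))
  rw [Sym2.eq_swap (a := y), Sym2.eq_swap (a := w)] at h1
  exact Or.inr ⟨h1, hR.1.symm h2⟩

lemma exists_square_of_rel_of_not_transGen (hR : IsRSP G R) (hxy : G.Adj x y)
    (hxz : G.Adj x z) (hyz : y ≠ z) (hr : R s(x, y) s(x, z))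
    (hΔ : ¬ TransGen (Delta0 G) s(x, y) s(x, z)) :
    ∃ w, w ≠ x ∧ G.Adj y w ∧ G.Adj z w ∧ R s(x, y) s(z, w) ∧ R s(x, z) s(y, w) := by
  obtain ⟨w, hwx, hyw, hzw⟩ :=
    exists_common_neighbor_of_not_delta0 hxy hxz hyz fun h => hΔ (.single h)
  refine ⟨w, hwx, hyw, hzw, ?_⟩
  rcases hR.rel_or_rel_of_not_transGen hxy hxz hwx hyw hzw hΔ with hy | hy
  · rcases hR.rel_or_rel_of_not_transGen hxz hxy hwx hzw hyw (fun h => hΔ (symm h)) with hz | hz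
    · exact ⟨hR.1.trans hr hz, hR.1.trans (hR.1.symm hr) hy⟩
    · exact hz.symm
  · exact hy

lemma inf_transGen_delta0 (hR : IsRSP G R) :
    IsRSP G (fun e f => R e f ∧ TransGen (Delta0 G) e f) := by
  refine ⟨hR.1.inf fun e he => .single (Or.inr (Or.inr ⟨rfl, he⟩)), ?_⟩
  intro x y z hxy hxz hyz hS
  obtain ⟨w, hwx, hyw, hzw, h1, h2⟩ :
      ∃ w, w ≠ x ∧ G.Adj y w ∧ G.Adj z w ∧ R s(x, y) s(z, w) ∧ R s(x, z) s(y, w) := by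
    by_cases hr : R s(x, y) s(x, z)
    · exact hR.exists_square_of_rel_of_not_transGen hxy hxz hyz hr fun h => hS ⟨hr, h⟩
    · obtain ⟨w, hwx, -, -, hyw, hzw, h1, h2⟩ := hR.2 x y z hxy hxz hyz hr
      exact ⟨w, hwx, hyw, hzw, h1, h2⟩
  obtain ⟨d1, d2⟩ := delta0_opposite_edges hxy hxz hyz hwx hyw hzw
  exact ⟨w, hwx, hyw.ne', hzw.ne', hyw, hzw, ⟨h1, .single d1⟩, h2, .single d2⟩

end IsRSP

lemma IsFinestRSP.le_transGen_delta0 (hR : IsFinestRSP G R) : R ≤ TransGen (Delta0 G) :=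
  fun e f h => (hR.2 _ hR.1.inf_transGen_delta0 (fun _ _ h => h.1) e f h).2

lemma K23Free.not_squareInK23 (hfree : K23Free G) (hsq : SquareIn G a b c d) :
    ¬ SquareInK23 G a b c d := by
  obtain ⟨hac, hbd, hab, hbc, hcd, hda⟩ := hsq
  rintro (⟨w, hwb, hwd, haw, hcw⟩ | ⟨w, hwa, hwc, hbw, hdw⟩)
  · exact hfree ⟨a, c, b, d, w, hac, hbd, hwb.symm, hwd.symm, hab, hda.symm, haw,
      hbc.symm, hcd, hcw⟩
  · exact hfree ⟨b, d, a, c, w, hbd, hac, hwa.symm, hwc.symm, hab.symm, hbc, hbw,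
      hda, hcd.symm, hdw⟩

lemma K23Free.transGen_delta0_le (hfree : K23Free G) :
    TransGen (Delta0 G) ≤ TransGen (fun e f => TauRel G e f ∨ Delta1 G e f) := by
  refine TransGen.mono fun e f h => ?_
  rcases h with ⟨a, b, c, d, hsq, he, hf⟩ | h | h
  · exact Or.inr <| Or.inr ⟨a, b, c, d, hsq, hfree.not_squareInK23 hsq, he, hf⟩
  · exact Or.inl h
  · exact Or.inr <| Or.inl h

theorem stmt4_general (G : SimpleGraph V)
    (R : Sym2 V → Sym2 V → Prop) (hR : IsFinestRSP G R) :
    (∀ e f, Relation.TransGen (fun a b => TauRel G a b ∨ Delta1 G a b) e f → R e f) ∧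
    (∀ e f, R e f → Relation.TransGen (Delta0 G) e f) ∧
    (K23Free G → ∀ e f,
      (R e f ↔ Relation.TransGen (fun a b => TauRel G a b ∨ Delta1 G a b) e f) ∧
      (R e f ↔ Relation.TransGen (Delta0 G) e f)) := by
  have lower := hR.1.transGen_le
  have upper := hR.le_transGen_delta0
  refine ⟨lower, upper, fun hfree e f => ?_⟩
  have collapse := hfree.transGen_delta0_le
  exact ⟨⟨fun h => collapse e f (upper e f h), lower e f⟩,
    ⟨upper e f, fun h => lower e f (collapse e f h)⟩⟩

/-- Every finest RSP-relation `R` on a connected graph satisfies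
`(τ ∪ δ₁)* ⊆ R ⊆ δ₀*`; if moreover `G` is `K_{2,3}`-free, all three coincide. -/
theorem stmt4 (G : SimpleGraph V) (hG : G.Connected)
    (R : Sym2 V → Sym2 V → Prop) (hR : IsFinestRSP G R) :
    (∀ e f, Relation.TransGen (fun a b => TauRel G a b ∨ Delta1 G a b) e f → R e f) ∧
    (∀ e f, R e f → Relation.TransGen (Delta0 G) e f) ∧
    (K23Free G → ∀ e f,
      (R e f ↔ Relation.TransGen (fun a b => TauRel G a b ∨ Delta1 G a b) e f) ∧
      (R e f ↔ Relation.TransGen (Delta0 G) e f)) :=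
  stmt4_general G R hR
end

section
/- Let G be the Cartesian product of graphs G_i (i ∈ I), and for each i let R_i be an equivalence relation on E(G_i). Define R on E(G) by: (e,f) ∈ R iff e and f are edges of the same factor direction j and (p_j(e), p_j(f)) ∈ R_j. Then R is an RSP-relation on E(G) if and only if each R_i is an RSP-relation on E(G_i). -/
open SimpleGraph

variable {V : Type*}

/-- The Cartesian product of an indexed family of simple graphs. -/
def cartProd {I : Type*} {W : I → Type*} (G : ∀ i, SimpleGraph (W i)) :
    SimpleGraph (∀ i, W i) where
  Adj x y := ∃ j, (G j).Adj (x j) (y j) ∧ ∀ i, i ≠ j → x i = y i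
  symm := by
    constructor
    rintro x y ⟨j, h1, h2⟩
    exact ⟨j, h1.symm, fun i hi => (h2 i hi).symm⟩
  loopless := by
    constructor
    rintro x ⟨j, h1, -⟩
    exact (G j).loopless.irrefl _ h1

/-- The product relation `□ᵢ Rᵢ` on the edge set of a Cartesian product: two edges are
related iff they belong to the same factor direction `j` and their `j`-projections are
related by `Rⱼ`. -/
def prodRel {I : Type*} {W : I → Type*} (G : ∀ i, SimpleGraph (W i))
    (Rel : ∀ i, Sym2 (W i) → Sym2 (W i) → Prop)
    (e f : Sym2 (∀ i, W i)) : Prop :=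
  ∃ j, ∃ x y u v : ∀ i, W i, e = s(x, y) ∧ f = s(u, v) ∧
    (G j).Adj (x j) (y j) ∧ (∀ i, i ≠ j → x i = y i) ∧
    (G j).Adj (u j) (v j) ∧ (∀ i, i ≠ j → u i = v i) ∧
    Rel j s(x j, y j) s(u j, v j)

/-!
An edge of a Cartesian product has a unique direction, and `prodRel` only relates edges of
equal direction. Two edges `xy`, `xz` in different directions `j ≠ k` always span the square
with fourth vertex `update y k (z k)`, whose opposite edges have equal projections. Two edges
in the same direction `j` lie in the layer `range (Function.update x j)`, a copy of `G j` on
which `prodRel` is `Rel j`, and the squares the RSP condition asks for lie in that layer, in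
the product as in `G j`.
-/

def HasRSPSquare (G : SimpleGraph V) (R : Sym2 V → Sym2 V → Prop) (x y z : V) : Prop :=
  ∃ w : V, w ≠ x ∧ w ≠ y ∧ w ≠ z ∧ G.Adj y w ∧ G.Adj z w ∧
    R s(x, y) s(z, w) ∧ R s(x, z) s(y, w)

section CartProd

variable {I : Type*} {W : I → Type*} {G : ∀ i, SimpleGraph (W i)}
  {Rel : ∀ i, Sym2 (W i) → Sym2 (W i) → Prop} {j k : I} {x y z u v : ∀ i, W i}

def DirAdj (G : ∀ i, SimpleGraph (W i)) (j : I) (x y : ∀ i, W i) : Prop :=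
  (G j).Adj (x j) (y j) ∧ ∀ i, i ≠ j → x i = y i

theorem cartProd_adj_iff : (cartProd G).Adj x y ↔ ∃ j, DirAdj G j x y :=
  Iff.rfl

namespace DirAdj

theorem symm (h : DirAdj G j x y) : DirAdj G j y x :=
  ⟨h.1.symm, fun i hi => (h.2 i hi).symm⟩

theorem dir_unique (hj : DirAdj G j x y) (hk : DirAdj G k x y) : j = k := by
  by_contra hjk
  exact hj.1.ne (hk.2 j hjk)

theorem update_eq [DecidableEq I] (h : DirAdj G j x y) : Function.update x j (y j) = y :=
  Function.update_eq_iff.2 ⟨rfl, h.2⟩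

theorem of_sym2_eq (h : DirAdj G j x y) (he : s(x, y) = s(u, v)) : DirAdj G j u v := by
  rcases Sym2.eq_iff.1 he with ⟨rfl, rfl⟩ | ⟨rfl, rfl⟩
  exacts [h, h.symm]

end DirAdj

theorem dirAdj_update_iff [DecidableEq I] {a c : W j} :
    DirAdj G j (Function.update x j a) (Function.update x j c) ↔ (G j).Adj a c := by
  simp +contextual [DirAdj, Function.update_of_ne]

theorem cartProd_adj_update_iff [DecidableEq I] {a c : W j} :
    (cartProd G).Adj (Function.update x j a) (Function.update x j c) ↔ (G j).Adj a c := by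
  refine ⟨fun ⟨k, hk⟩ => ?_, fun h => ⟨j, dirAdj_update_iff.2 h⟩⟩
  obtain rfl | hkj := eq_or_ne k j
  · exact dirAdj_update_iff.1 hk
  · simp [Function.update_of_ne hkj] at hk

theorem prodRel_iff :
    prodRel G Rel s(x, y) s(u, v) ↔
      ∃ j, DirAdj G j x y ∧ DirAdj G j u v ∧ Rel j s(x j, y j) s(u j, v j) := by
  refine ⟨?_, fun ⟨j, hxy, huv, hR⟩ => ⟨j, x, y, u, v, rfl, rfl, hxy.1, hxy.2, huv.1, huv.2, hR⟩⟩
  rintro ⟨j, x', y', u', v', he, hf, hxy₁, hxy₂, huv₁, huv₂, hR⟩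
  have hproj : ∀ {p q p' q' : ∀ i, W i}, s(p, q) = s(p', q') → s(p j, q j) = s(p' j, q' j) :=
    fun h => by simpa using congrArg (Sym2.map (· j)) h
  rw [← hproj he, ← hproj hf] at hR
  exact ⟨j, DirAdj.of_sym2_eq ⟨hxy₁, hxy₂⟩ he.symm, DirAdj.of_sym2_eq ⟨huv₁, huv₂⟩ hf.symm, hR⟩

theorem prodRel_iff_of_dirAdj (hxy : DirAdj G j x y) (huv : DirAdj G j u v) :
    prodRel G Rel s(x, y) s(u, v) ↔ Rel j s(x j, y j) s(u j, v j) := by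
  refine ⟨fun h => ?_, fun hR => prodRel_iff.2 ⟨j, hxy, huv, hR⟩⟩
  obtain ⟨k, hxy', -, hR⟩ := prodRel_iff.1 h
  obtain rfl := hxy.dir_unique hxy'
  exact hR

theorem isEquivOn_prodRel (hequiv : ∀ i, IsEquivOn (Rel i) (G i).edgeSet) :
    IsEquivOn (prodRel G Rel) (cartProd G).edgeSet where
  refl e he := by
    induction e using Sym2.ind with
    | _ x y =>
      obtain ⟨j, hxy⟩ := he
      exact (prodRel_iff_of_dirAdj hxy hxy).2 ((hequiv j).refl _ hxy.1)
  symm := by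
    rintro e f ⟨j, x, y, u, v, rfl, rfl, hxy₁, hxy₂, huv₁, huv₂, hR⟩
    exact ⟨j, u, v, x, y, rfl, rfl, huv₁, huv₂, hxy₁, hxy₂, (hequiv j).symm hR⟩
  trans := by
    rintro e f g ⟨j, x, y, u, v, rfl, rfl, hxy₁, hxy₂, huv₁, huv₂, hR⟩ hfg
    induction g using Sym2.ind with
    | _ p q =>
      obtain ⟨k, huv', hpq, hR'⟩ := prodRel_iff.1 hfg
      obtain rfl := DirAdj.dir_unique ⟨huv₁, huv₂⟩ huv'
      exact prodRel_iff.2 ⟨j, ⟨hxy₁, hxy₂⟩, hpq, (hequiv j).trans hR hR'⟩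
  mem_left := by
    rintro e f ⟨j, x, y, u, v, rfl, -, hxy₁, hxy₂, -⟩
    exact ⟨j, hxy₁, hxy₂⟩
  mem_right := by
    rintro e f ⟨j, x, y, u, v, -, rfl, -, -, huv₁, huv₂, -⟩
    exact ⟨j, huv₁, huv₂⟩

theorem dirAdj_update_self_iff [DecidableEq I] {a : W j} :
    DirAdj G j x (Function.update x j a) ↔ (G j).Adj (x j) a := by
  have h := dirAdj_update_iff (G := G) (x := x) (a := x j) (c := a)
  rwa [Function.update_eq_self] at h

theorem prodRel_update_iff [DecidableEq I] {a b c d : W j} (hab : (G j).Adj a b)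
    (hcd : (G j).Adj c d) :
    prodRel G Rel s(Function.update x j a, Function.update x j b)
        s(Function.update x j c, Function.update x j d) ↔ Rel j s(a, b) s(c, d) := by
  rw [prodRel_iff_of_dirAdj (dirAdj_update_iff.2 hab) (dirAdj_update_iff.2 hcd)]
  simp only [Function.update_self]

/- The fourth vertex of a product square lies in the layer too: `prodRel` forces its edge
from `update x j c` to point in direction `j`. -/
theorem hasRSPSquare_update_iff [DecidableEq I] {a b c : W j} (hab : (G j).Adj a b)
    (hac : (G j).Adj a c) :
    HasRSPSquare (cartProd G) (prodRel G Rel)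
        (Function.update x j a) (Function.update x j b) (Function.update x j c) ↔
      HasRSPSquare (G j) (Rel j) a b c := by
  constructor
  · rintro ⟨w, hwa, hwb, hwc, hbw, hcw, hR₁, hR₂⟩
    obtain ⟨w, rfl⟩ : ∃ w', w = Function.update x j w' := by
      obtain ⟨k, hab', hcw', -⟩ := prodRel_iff.1 hR₁
      have hjk := (dirAdj_update_iff.2 hab).dir_unique hab'
      subst hjk
      exact ⟨w j, hcw'.update_eq.symm.trans (Function.update_idem _ _ _)⟩
    have hbw' := cartProd_adj_update_iff.1 hbw
    have hcw' := cartProd_adj_update_iff.1 hcw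
    exact ⟨w, mt (congrArg _) hwa, mt (congrArg _) hwb, mt (congrArg _) hwc, hbw', hcw',
      (prodRel_update_iff hab hcw').1 hR₁, (prodRel_update_iff hac hbw').1 hR₂⟩
  · rintro ⟨w, hwa, hwb, hwc, hbw, hcw, hR₁, hR₂⟩
    have hL := Function.update_injective x j
    exact ⟨Function.update x j w, hL.ne hwa, hL.ne hwb, hL.ne hwc,
      cartProd_adj_update_iff.2 hbw, cartProd_adj_update_iff.2 hcw,
      (prodRel_update_iff hab hcw).2 hR₁, (prodRel_update_iff hac hbw).2 hR₂⟩

theorem hasRSPSquare_of_dirAdj [DecidableEq I]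
    (hsq : HasRSPSquare (G j) (Rel j) (x j) (y j) (z j)) (hy : DirAdj G j x y)
    (hz : DirAdj G j x z) : HasRSPSquare (cartProd G) (prodRel G Rel) x y z := by
  have hsq' := (hasRSPSquare_update_iff (x := x) hy.1 hz.1).2 hsq
  rwa [Function.update_eq_self, hy.update_eq, hz.update_eq] at hsq'

theorem hasRSPSquare_of_dir_ne [DecidableEq I] (hequiv : ∀ i, IsEquivOn (Rel i) (G i).edgeSet)
    (hy : DirAdj G j x y) (hz : DirAdj G k x z) (hjk : j ≠ k) :
    HasRSPSquare (cartProd G) (prodRel G Rel) x y z := by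
  have hzj : z j = x j := (hz.2 j hjk).symm
  have hyk : y k = x k := (hy.2 k hjk.symm).symm
  set w := Function.update z j (y j)
  have hw : Function.update y k (z k) = w := by
    refine Function.update_eq_iff.2 ⟨by simp [w, Function.update_of_ne hjk.symm], fun i hik => ?_⟩
    obtain rfl | hij := eq_or_ne i j
    · simp [w]
    · change y i = Function.update z j (y j) i
      rw [Function.update_of_ne hij, ← hz.2 i hik, hy.2 i hij]
  have hwj : w j = y j := Function.update_self ..
  have hwk : w k = z k := by rw [← hw, Function.update_self]
  have hyw : DirAdj G k y w := hw ▸ dirAdj_update_self_iff.2 (hyk ▸ hz.1)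
  have hzw : DirAdj G j z w := dirAdj_update_self_iff.2 (hzj ▸ hy.1)
  refine ⟨w, fun h => hy.1.ne' (hwj.symm.trans (congrFun h j)),
    fun h => hz.1.ne' (hwk.symm.trans ((congrFun h k).trans hyk)),
    fun h => hy.1.ne' (hwj.symm.trans ((congrFun h j).trans hzj)), ⟨k, hyw⟩, ⟨j, hzw⟩, ?_, ?_⟩
  · rw [prodRel_iff_of_dirAdj hy hzw, hzj, hwj]
    exact (hequiv j).refl _ hy.1
  · rw [prodRel_iff_of_dirAdj hz hyw, hyk, hwk]
    exact (hequiv k).refl _ hz.1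

theorem isRSP_cartProd (h : ∀ i, IsRSP (G i) (Rel i)) : IsRSP (cartProd G) (prodRel G Rel) := by
  classical
  refine ⟨isEquivOn_prodRel fun i => (h i).1, ?_⟩
  intro x y z hxy hxz hyz hR
  obtain ⟨j, hy⟩ := cartProd_adj_iff.1 hxy
  obtain ⟨k, hz⟩ := cartProd_adj_iff.1 hxz
  obtain rfl | hjk := eq_or_ne j k
  · refine hasRSPSquare_of_dirAdj ((h j).2 _ _ _ hy.1 hz.1 (fun h => hyz ?_) fun hr => ?_) hy hz
    · rw [← hy.update_eq, ← hz.update_eq, h]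
    · exact hR ((prodRel_iff_of_dirAdj hy hz).2 hr)
  · exact hasRSPSquare_of_dir_ne (fun i => (h i).1) hy hz hjk

theorem IsRSP.of_cartProd (b : ∀ i, W i) (hequiv : IsEquivOn (Rel j) (G j).edgeSet)
    (h : IsRSP (cartProd G) (prodRel G Rel)) : IsRSP (G j) (Rel j) := by
  classical
  refine ⟨hequiv, fun a c d hac had hcd hR => (hasRSPSquare_update_iff (x := b) hac had).1 ?_⟩
  exact h.2 _ _ _ (cartProd_adj_update_iff.2 hac) (cartProd_adj_update_iff.2 had)
    ((Function.update_injective b j).ne hcd) fun hr => hR ((prodRel_update_iff hac had).1 hr)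

end CartProd

theorem stmt5_general {I : Type} {W : I → Type}
    (G : ∀ i, SimpleGraph (W i)) (hconn : ∀ i, (G i).Connected)
    (Rel : ∀ i, Sym2 (W i) → Sym2 (W i) → Prop)
    (hequiv : ∀ i, IsEquivOn (Rel i) (G i).edgeSet) :
    IsRSP (cartProd G) (prodRel G Rel) ↔ ∀ i, IsRSP (G i) (Rel i) :=
  ⟨fun h i => h.of_cartProd (fun i => (hconn i).nonempty.some) (hequiv i), isRSP_cartProd⟩

/-- The product of equivalence relations on the factors of a Cartesian product is an
RSP-relation iff each factor relation is an RSP-relation. -/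
theorem stmt5 {I : Type} [Fintype I] {W : I → Type} [∀ i, Fintype (W i)]
    (G : ∀ i, SimpleGraph (W i)) (hconn : ∀ i, (G i).Connected)
    (Rel : ∀ i, Sym2 (W i) → Sym2 (W i) → Prop)
    (hequiv : ∀ i, IsEquivOn (Rel i) (G i).edgeSet) :
    IsRSP (cartProd G) (prodRel G Rel) ↔ ∀ i, IsRSP (G i) (Rel i) :=
  stmt5_general G hconn Rel hequiv
end

section
/- Let V(K_m) = {0,…,m−1} and for i = 1,…,⌊m/2⌋ define φ_i = { [x, (x+i) mod m] : x ∈ {0,…,m−1} }. Then the sets φ_1,…,φ_{⌊m/2⌋} are pairwise disjoint, their union is E(K_m), and the equivalence relation R on E(K_m) whose classes are the φ_i is an RSP-relation. Moreover, if m ≠ 4, then R is a finest RSP-relation. -/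
open SimpleGraph

variable {V : Type*}

/-- The set `φᵢ` of edges `[x, x+i]` of the complete graph on `ZMod m`. -/
def phiKm (m : ℕ) (i : ℕ) : Set (Sym2 (ZMod m)) :=
  {e | ∃ x : ZMod m, e = s(x, x + (i : ZMod m))}

/-- The relation on `E(K_m)` whose classes are the sets `φ₁, …, φ_{⌊m/2⌋}`. -/
def KmRel (m : ℕ) (e f : Sym2 (ZMod m)) : Prop :=
  ∃ i : ℕ, 1 ≤ i ∧ i ≤ m / 2 ∧ e ∈ phiKm m i ∧ f ∈ phiKm m i

lemma mem_phi_iff {m k : ℕ} {a b : ZMod m} :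
    s(a,b) ∈ phiKm m k ↔ (b = a + (k : ZMod m) ∨ a = b + (k : ZMod m)) := by
  constructor
  · rintro ⟨x, hx⟩
    rcases Sym2.eq_iff.1 hx with ⟨h1, h2⟩ | ⟨h1, h2⟩
    · left; rw [h2, h1]
    · right; rw [h1, h2]
  · rintro (h | h)
    · exact ⟨a, by rw [h]⟩
    · exact ⟨b, by rw [h]; exact Sym2.eq_swap⟩

lemma mem_phi_of_diff {m k : ℕ} (u d : ZMod m) (h : (k : ZMod m) = d ∨ (k : ZMod m) = -d) :
    s(u, u + d) ∈ phiKm m k := by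
  rcases h with h | h
  · exact mem_phi_iff.2 (Or.inl (by rw [h]))
  · exact mem_phi_iff.2 (Or.inr (by rw [h]; ring))

lemma diff_of_mem_phi {m k : ℕ} {u d : ZMod m} (h : s(u, u + d) ∈ phiKm m k) :
    (k : ZMod m) = d ∨ (k : ZMod m) = -d := by
  rcases mem_phi_iff.1 h with h | h
  · left; linear_combination -h
  · right; linear_combination -h

lemma cast_ne_zero_of_le {m k : ℕ} (hm : 0 < m) (h1 : 1 ≤ k) (h2 : k ≤ m / 2) :
    (k : ZMod m) ≠ 0 := by
  have : ¬ m ∣ k := by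
    intro h; have := Nat.le_of_dvd (by omega) h; omega
  simpa [ZMod.natCast_eq_zero_iff] using this

lemma exists_k {m : ℕ} (hm : 0 < m) {d : ZMod m} (hd : d ≠ 0) :
    ∃ k : ℕ, 1 ≤ k ∧ k ≤ m / 2 ∧ ((k : ZMod m) = d ∨ (k : ZMod m) = -d) := by
  haveI : NeZero m := ⟨hm.ne'⟩
  have hv : d.val < m := ZMod.val_lt d
  have hv0 : d.val ≠ 0 := fun h => hd (by rw [← ZMod.natCast_rightInverse d, h]; simp)
  by_cases hle : d.val ≤ m / 2
  · exact ⟨d.val, by omega, hle, Or.inl (ZMod.natCast_rightInverse d)⟩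
  · refine ⟨m - d.val, by omega, by omega, Or.inr ?_⟩
    have : ((m - d.val : ℕ) : ZMod m) = (m : ZMod m) - (d.val : ZMod m) := by
      have := Nat.cast_sub (le_of_lt hv) (R := ZMod m)
      exact this
    rw [this, ZMod.natCast_rightInverse d, ZMod.natCast_self]
    ring

lemma kmrel_of_diffs {m : ℕ} (hm : 0 < m) {d d' : ZMod m} (u p : ZMod m) (hd : d ≠ 0)
    (h : d' = d ∨ d' = -d) : KmRel m s(u, u + d) s(p, p + d') := by
  obtain ⟨k, hk1, hk2, hk⟩ := exists_k hm hd
  refine ⟨k, hk1, hk2, mem_phi_of_diff u d hk, mem_phi_of_diff p d' ?_⟩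
  rcases h with h | h <;> rcases hk with hk | hk
  · exact Or.inl (by rw [hk, h])
  · exact Or.inr (by rw [hk, h])
  · exact Or.inr (by rw [hk, h, neg_neg])
  · exact Or.inl (by rw [hk, h])

lemma diffs_of_kmrel {m : ℕ} {d d' : ZMod m} {u p : ZMod m}
    (h : KmRel m s(u, u + d) s(p, p + d')) : d' = d ∨ d' = -d := by
  obtain ⟨k, _, _, he, hf⟩ := h
  rcases diff_of_mem_phi he with h1 | h1 <;> rcases diff_of_mem_phi hf with h2 | h2
  · left; linear_combination h1 - h2
  · right; linear_combination h2 - h1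
  · right; linear_combination h1 - h2
  · left; linear_combination h2 - h1

lemma two_mul_eq_zero {m : ℕ} (hm : 0 < m) {a : ZMod m} (h : 2 * a = 0) :
    a = 0 ∨ a.val * 2 = m := by
  haveI : NeZero m := ⟨hm.ne'⟩
  have hcast : ((a.val + a.val : ℕ) : ZMod m) = 0 := by
    push_cast
    rw [ZMod.natCast_rightInverse a]
    linear_combination h
  have hdvd : m ∣ a.val + a.val := (ZMod.natCast_eq_zero_iff _ m).1 hcast
  have hlt : a.val < m := ZMod.val_lt a
  obtain ⟨c, hc⟩ := hdvd
  rcases Nat.lt_or_ge c 1 with h1 | h1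
  · left
    have : a.val = 0 := by nlinarith
    rw [← ZMod.natCast_rightInverse a, this]; simp
  · right
    have hc2 : c = 1 := by nlinarith
    subst hc2
    omega

lemma half_val {m : ℕ} (hm : 0 < m) : (((m / 2 : ℕ) : ZMod m)).val = m / 2 :=
  ZMod.val_cast_of_lt (by omega)

lemma two_mul_inj {m : ℕ} (hm : 0 < m) {a b : ZMod m} (h : 2 * a = 2 * b) :
    a = b ∨ a = b + ((m / 2 : ℕ) : ZMod m) := by
  haveI : NeZero m := ⟨hm.ne'⟩
  have : 2 * (a - b) = 0 := by linear_combination h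
  rcases two_mul_eq_zero hm this with h1 | h1
  · left; linear_combination h1
  · right
    have hv : (a - b).val = m / 2 := by omega
    have : a - b = ((m / 2 : ℕ) : ZMod m) := by
      apply ZMod.val_injective
      rw [hv, half_val hm]
    linear_combination this

-- Part 1: disjointness
lemma phi_disjoint {m : ℕ} (hm : 0 < m) : ∀ i j : ℕ, 1 ≤ i → i ≤ m / 2 → 1 ≤ j → j ≤ m / 2 →
    i ≠ j → Disjoint (phiKm m i) (phiKm m j) := by
  intro i j hi1 hi2 hj1 hj2 hij
  rw [Set.disjoint_left]
  rintro e ⟨x, rfl⟩ ⟨y, hy⟩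
  rcases Sym2.eq_iff.1 hy with ⟨h1, h2⟩ | ⟨h1, h2⟩
  · subst h1
    have hmod : ((i : ℕ) : ZMod m) = ((j : ℕ) : ZMod m) := by linear_combination h2
    rw [ZMod.natCast_eq_natCast_iff] at hmod
    have hi : i % m = i := Nat.mod_eq_of_lt (by omega)
    have hj : j % m = j := Nat.mod_eq_of_lt (by omega)
    have : i % m = j % m := hmod
    omega
  · have hz : ((i + j : ℕ) : ZMod m) = 0 := by push_cast; linear_combination h2 - h1
    have hdvd : m ∣ i + j := (ZMod.natCast_eq_zero_iff _ m).1 hz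
    have := Nat.le_of_dvd (by omega) hdvd
    have : i + j ≤ m := by omega
    have : i + j = m := Nat.le_antisymm this (Nat.le_of_dvd (by omega) hdvd)
    omega

-- Part 2: union
lemma phi_mem_edgeSet {m : ℕ} (hm : 0 < m) {k : ℕ} (hk1 : 1 ≤ k) (hk2 : k ≤ m / 2)
    {e : Sym2 (ZMod m)} (he : e ∈ phiKm m k) : e ∈ (⊤ : SimpleGraph (ZMod m)).edgeSet := by
  obtain ⟨x, rfl⟩ := he
  rw [SimpleGraph.mem_edgeSet, SimpleGraph.top_adj]
  intro h
  exact cast_ne_zero_of_le hm hk1 hk2 (by linear_combination -h)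

lemma phi_union {m : ℕ} (hm : 0 < m) :
    (⋃ i ∈ Set.Icc 1 (m / 2), phiKm m i) = (⊤ : SimpleGraph (ZMod m)).edgeSet := by
  apply Set.Subset.antisymm
  · rintro e he
    simp only [Set.mem_iUnion] at he
    obtain ⟨k, ⟨hk1, hk2⟩, he⟩ := he
    exact phi_mem_edgeSet hm hk1 hk2 he
  · rintro e he
    induction e with
    | h a b =>
      rw [SimpleGraph.mem_edgeSet, SimpleGraph.top_adj] at he
      have hd : b - a ≠ 0 := sub_ne_zero_of_ne (Ne.symm he)
      obtain ⟨k, hk1, hk2, hk⟩ := exists_k hm hd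
      simp only [Set.mem_iUnion]
      refine ⟨k, ⟨hk1, hk2⟩, ?_⟩
      have : s(a, b) = s(a, a + (b - a)) := by ring_nf
      rw [this]
      exact mem_phi_of_diff a (b - a) hk

-- Part 3: IsRSP
lemma km_isRSP {m : ℕ} (hm : 0 < m) : IsRSP (⊤ : SimpleGraph (ZMod m)) (KmRel m) := by
  constructor
  · constructor
    · -- refl
      intro e he
      rw [← phi_union hm] at he
      simp only [Set.mem_iUnion] at he
      obtain ⟨k, ⟨hk1, hk2⟩, he⟩ := he
      exact ⟨k, hk1, hk2, he, he⟩
    · rintro e f ⟨k, h1, h2, he, hf⟩; exact ⟨k, h1, h2, hf, he⟩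
    · rintro e f g ⟨k, h1, h2, he, hf⟩ ⟨l, h1', h2', hf', hg⟩
      have hkl : k = l := by
        by_contra hne
        exact Set.disjoint_left.1 (phi_disjoint hm k l h1 h2 h1' h2' hne) hf hf'
      exact ⟨k, h1, h2, he, hkl ▸ hg⟩
    · rintro e f ⟨k, h1, h2, he, _⟩; exact phi_mem_edgeSet hm h1 h2 he
    · rintro e f ⟨k, h1, h2, _, hf⟩; exact phi_mem_edgeSet hm h1 h2 hf
  · intro x y z hxy hxz hyz hR
    rw [SimpleGraph.top_adj] at hxy hxz
    set a := y - x with ha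
    set b := z - x with hb
    have hya : y = x + a := by rw [ha]; ring
    have hzb : z = x + b := by rw [hb]; ring
    have ha0 : a ≠ 0 := sub_ne_zero_of_ne (Ne.symm hxy)
    have hb0 : b ≠ 0 := sub_ne_zero_of_ne (Ne.symm hxz)
    have hab : a ≠ b := fun h => hyz (by rw [hya, hzb, h])
    have hanb : a ≠ -b := by
      intro h
      apply hR
      rw [hya, hzb]
      exact kmrel_of_diffs hm x x ha0 (Or.inr (by rw [h]; ring))
    refine ⟨x + a + b, ?_, ?_, ?_, ?_, ?_, ?_, ?_⟩
    · intro h; apply hanb; have : a + b = 0 := by linear_combination h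
      linear_combination this
    · rw [hya]; intro h; exact hb0 (by linear_combination h)
    · rw [hzb]; intro h; exact ha0 (by linear_combination h)
    · rw [SimpleGraph.top_adj, hya]; intro h; exact hb0 (by linear_combination -h)
    · rw [SimpleGraph.top_adj, hzb]; intro h; exact ha0 (by linear_combination -h)
    · rw [hya, hzb]
      have : s(x + b, x + a + b) = s(x + b, (x + b) + a) := by ring_nf
      rw [this]
      exact kmrel_of_diffs hm x (x + b) ha0 (Or.inl rfl)
    · rw [hya, hzb]
      have : s(x + a, x + a + b) = s(x + a, (x + a) + b) := by ring_nf
      rw [this]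
      exact kmrel_of_diffs hm x (x + a) hb0 (Or.inl rfl)

-- Part 4: finest
lemma km_key {m : ℕ} (hm : 0 < m) (hm4 : m ≠ 4) (S : Sym2 (ZMod m) → Sym2 (ZMod m) → Prop)
    (hS : IsRSP (⊤ : SimpleGraph (ZMod m)) S)
    (hsub : ∀ e f, S e f → KmRel m e f) {i : ZMod m} (hi : i ≠ 0) :
    ∀ x y : ZMod m, S s(x, x + i) s(y, y + i) := by
  haveI : NeZero m := ⟨hm.ne'⟩
  set dm : ZMod m := ((m / 2 : ℕ) : ZMod m) with hdm
  -- basic adjacency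
  have hadj : ∀ (x : ZMod m) (d : ZMod m), d ≠ 0 → (⊤ : SimpleGraph (ZMod m)).Adj x (x + d) := by
    intro x d hd
    rw [SimpleGraph.top_adj]
    intro h; exact hd (by linear_combination -h)
  have hrefl : ∀ x : ZMod m, S s(x, x + i) s(x, x + i) := fun x =>
    hS.1.refl _ ((SimpleGraph.mem_edgeSet _).2 (hadj x i hi))
  -- difference extraction
  have hdiff : ∀ {d : ZMod m} {u p q : ZMod m}, S s(u, u + d) s(p, q) →
      q = p + d ∨ q = p - d := by
    intro d u p q h
    have h2 : s(p, q) = s(p, p + (q - p)) := by ring_nf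
    rw [h2] at h
    rcases diffs_of_kmrel (hsub _ _ h) with h3 | h3
    · left; linear_combination h3
    · right; linear_combination h3
  have hnotS : ∀ (x j : ZMod m), j ≠ i → j ≠ -i → ¬ S s(x, x + i) s(x, x + j) := by
    intro x j h1 h2 hcon
    rcases diffs_of_kmrel (hsub _ _ hcon) with h3 | h3
    exacts [h1 h3, h2 h3]
  -- Step A: translation by admissible j
  have hA : ∀ j : ZMod m, j ≠ 0 → j ≠ i → j ≠ -i → 2 * j ≠ 2 * i →
      ∀ x : ZMod m, S s(x, x + i) s(x + j, (x + j) + i) := by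
    intro j hj0 hji hjni hj2 x
    obtain ⟨w, hw1, hw2, hw3, _, _, hs1, hs2⟩ :=
      hS.2 x (x + i) (x + j) (hadj x i hi) (hadj x j hj0)
        (fun h => hji (by linear_combination -h)) (hnotS x j hji hjni)
    rcases hdiff hs1 with h1 | h1
    · rw [h1] at hs1; exact hs1
    · rcases hdiff hs2 with h2 | h2
      · have h2i : 2 * i = 0 := by linear_combination h1 - h2
        have hw : w = (x + j) + i := by linear_combination h1 - h2i
        rw [hw] at hs1; exact hs1
      · exact absurd (by linear_combination h2 - h1 : 2 * j = 2 * i) hj2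
  -- Step B: translation by -i when 2i ≠ 0 and 4i ≠ 0
  have hB : 2 * i ≠ 0 → 4 * i ≠ 0 → ∀ x : ZMod m,
      S s(x, x + i) s(x + -i, (x + -i) + i) := by
    intro h2i h4i x
    have hrw : s(x, x + -i) = s(x + -i, (x + -i) + i) := by
      have h1 : (x + -i) + i = x := by ring
      rw [h1]; exact Sym2.eq_swap
    by_cases hc : S s(x, x + i) s(x, x + -i)
    · rw [hrw] at hc; exact hc
    · obtain ⟨w, hw1, hw2, hw3, _, _, hs1, hs2⟩ :=
        hS.2 x (x + i) (x + -i) (hadj x i hi) (hadj x (-i) (neg_ne_zero.2 hi))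
          (fun h => h2i (by linear_combination h)) hc
      rcases hdiff hs1 with h1 | h1
      · exact absurd (by linear_combination h1 : w = x) hw1
      · rcases hdiff hs2 with h2 | h2
        · exact absurd (by linear_combination h2 : w = x) hw1
        · exact absurd (by linear_combination h1 - h2 : 4 * i = 0) h4i
  -- the set of good translations
  have P0 : ∀ x : ZMod m, S s(x, x + i) s(x + 0, (x + 0) + i) := by
    intro x; simpa using hrefl x
  have Padd : ∀ t t' : ZMod m, (∀ x, S s(x, x + i) s(x + t, (x + t) + i)) →
      (∀ x, S s(x, x + i) s(x + t', (x + t') + i)) →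
      ∀ x, S s(x, x + i) s(x + (t + t'), (x + (t + t')) + i) := by
    intro t t' h h' x
    have := hS.1.trans (h x) (h' (x + t))
    have e : (x + t) + t' = x + (t + t') := by ring
    rw [e] at this; exact this
  have Pneg : ∀ t : ZMod m, (∀ x, S s(x, x + i) s(x + t, (x + t) + i)) →
      ∀ x, S s(x, x + i) s(x + -t, (x + -t) + i) := by
    intro t h x
    have := hS.1.symm (h (x + -t))
    have e : (x + -t) + t = x := by ring
    rw [e] at this; exact this
  -- main claim: all translations are good
  have Pall : ∀ t : ZMod m, ∀ x, S s(x, x + i) s(x + t, (x + t) + i) := by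
    by_cases h2i : 2 * i = 0
    · -- Branch 1
      have Pi : ∀ x, S s(x, x + i) s(x + i, (x + i) + i) := by
        intro x
        have h1 : (x + i) + i = x := by linear_combination h2i
        have e : s(x + i, (x + i) + i) = s(x, x + i) := by rw [h1]; exact Sym2.eq_swap
        rw [e]; exact hrefl x
      intro t
      by_cases ht0 : t = 0
      · rw [ht0]; exact P0
      by_cases hti : t = i
      · rw [hti]; exact Pi
      refine hA t ht0 hti ?_ ?_
      · intro h; exact hti (by linear_combination h - h2i)
      · intro h
        have h2t : 2 * t = 0 := by linear_combination h + h2i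
        rcases two_mul_eq_zero hm h2t with h' | h'
        · exact ht0 h'
        · rcases two_mul_eq_zero hm h2i with h'' | h''
          · exact hi h''
          · exact hti (ZMod.val_injective m (by omega))
    · by_cases h4i : 4 * i = 0
      · -- Branch 3 : 2i ≠ 0, 4i = 0
        have h22 : 2 * (2 * i) = 0 := by linear_combination h4i
        have h2iv : (2 * i).val * 2 = m := by
          rcases two_mul_eq_zero hm h22 with h' | h'
          · exact absurd h' h2i
          · exact h'
        have hdm2i : dm = 2 * i := by
          apply ZMod.val_injective
          rw [hdm, half_val hm]; omega
        have hm2 : m ≠ 2 := by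
          rintro rfl
          exact h2i ((by decide : ∀ a : ZMod 2, 2 * a = 0) i)
        have hv1 : (2 * i).val ≠ 0 := fun h => h2i ((ZMod.val_eq_zero _).1 h)
        have hm5 : 4 < m := by
          rcases Nat.lt_or_ge m 5 with h | h
          · interval_cases m <;> omega
          · exact by omega
        have PA3 : ∀ a : ZMod m, a ≠ i → a ≠ -i →
            ∀ x, S s(x, x + i) s(x + a, (x + a) + i) := by
          intro a hai hani
          by_cases ha0 : a = 0
          · rw [ha0]; exact P0
          refine hA a ha0 hai hani ?_
          intro h
          rcases two_mul_inj hm h with h' | h'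
          · exact hai h'
          · rw [← hdm, hdm2i] at h'
            exact hani (by linear_combination h' + h4i)
        have Pi : ∀ x, S s(x, x + i) s(x + i, (x + i) + i) := by
          have hex : ∃ a : ZMod m, a ∉ ({i, -i, 0, 2 * i} : Finset (ZMod m)) := by
            have hcard : ({i, -i, 0, 2 * i} : Finset (ZMod m)).card ≤ 4 := by
              apply le_trans (Finset.card_insert_le _ _)
              have := Finset.card_insert_le (-i) ({0, 2 * i} : Finset (ZMod m))
              have := Finset.card_insert_le (0 : ZMod m) ({2 * i} : Finset (ZMod m))
              simp only [Finset.card_singleton] at *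
              omega
            have : (({i, -i, 0, 2 * i} : Finset (ZMod m))ᶜ).Nonempty := by
              rw [← Finset.card_pos, Finset.card_compl, ZMod.card]
              omega
            obtain ⟨a, ha⟩ := this
            exact ⟨a, Finset.mem_compl.1 ha⟩
          obtain ⟨a, ha⟩ := hex
          simp only [Finset.mem_insert, Finset.mem_singleton, not_or] at ha
          obtain ⟨ha1, ha2, ha3, ha4⟩ := ha
          have hP1 := PA3 a ha1 ha2
          have hP2 := PA3 (i - a) (fun h => ha3 (by linear_combination -h))
            (fun h => ha4 (by linear_combination -h))
          have := Padd a (i - a) hP1 hP2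
          have e : a + (i - a) = i := by ring
          rw [e] at this; exact this
        intro t
        by_cases hti : t = i
        · rw [hti]; exact Pi
        by_cases htni : t = -i
        · rw [htni]; exact Pneg i Pi
        · exact PA3 t hti htni
      · -- Branch 2 : 2i ≠ 0, 4i ≠ 0
        have Pmi : ∀ x, S s(x, x + i) s(x + -i, (x + -i) + i) := hB h2i h4i
        have Pi : ∀ x, S s(x, x + i) s(x + i, (x + i) + i) := by
          have := Pneg (-i) Pmi
          simpa using this
        have hm3 : 2 < m := by
          rcases Nat.lt_or_ge m 3 with h | h
          · interval_cases m
            · exact absurd (Subsingleton.elim i 0) hi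
            · exact absurd ((by decide : ∀ a : ZMod 2, 2 * a = 0) i) h2i
          · exact h
        have PA : ∀ a : ZMod m, a ≠ i + dm →
            ∀ x, S s(x, x + i) s(x + a, (x + a) + i) := by
          intro a hadm
          by_cases ha0 : a = 0
          · rw [ha0]; exact P0
          by_cases hai : a = i
          · rw [hai]; exact Pi
          by_cases hani : a = -i
          · rw [hani]; exact Pmi
          refine hA a ha0 hai hani ?_
          intro h
          rcases two_mul_inj hm h with h' | h'
          · exact hai h'
          · rw [← hdm] at h'; exact hadm h'
        intro t
        have hex : ∃ a : ZMod m, a ∉ ({i + dm, t - (i + dm)} : Finset (ZMod m)) := by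
          have hcard : ({i + dm, t - (i + dm)} : Finset (ZMod m)).card ≤ 2 := by
            apply le_trans (Finset.card_insert_le _ _)
            simp
          have : (({i + dm, t - (i + dm)} : Finset (ZMod m))ᶜ).Nonempty := by
            rw [← Finset.card_pos, Finset.card_compl, ZMod.card]
            omega
          obtain ⟨a, ha⟩ := this
          exact ⟨a, Finset.mem_compl.1 ha⟩
        obtain ⟨a, ha⟩ := hex
        simp only [Finset.mem_insert, Finset.mem_singleton, not_or] at ha
        obtain ⟨ha1, ha2⟩ := ha
        have hP1 := PA a ha1
        have hP2 := PA (t - a) (fun h => ha2 (by linear_combination -h))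
        have := Padd a (t - a) hP1 hP2
        have e : a + (t - a) = t := by ring
        rw [e] at this; exact this
  intro x y
  have := Pall (y - x) x
  have e : x + (y - x) = y := by ring
  rw [e] at this; exact this

lemma km_finest {m : ℕ} (hm : 0 < m) (hm4 : m ≠ 4) :
    IsFinestRSP (⊤ : SimpleGraph (ZMod m)) (KmRel m) := by
  refine ⟨km_isRSP hm, ?_⟩
  intro S hS hsub e f hef
  obtain ⟨k, hk1, hk2, ⟨x, rfl⟩, ⟨y, rfl⟩⟩ := hef
  exact km_key hm hm4 S hS hsub (cast_ne_zero_of_le hm hk1 hk2) x y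


/-- The sets `φ₁, …, φ_{⌊m/2⌋}` are pairwise disjoint, partition `E(K_m)`, and the
equivalence relation with these classes is an RSP-relation, which is finest when `m ≠ 4`. -/
theorem stmt7 (m : ℕ) (hm : 0 < m) :
    (∀ i j : ℕ, 1 ≤ i → i ≤ m / 2 → 1 ≤ j → j ≤ m / 2 → i ≠ j →
      Disjoint (phiKm m i) (phiKm m j)) ∧
    (⋃ i ∈ Set.Icc 1 (m / 2), phiKm m i) = (⊤ : SimpleGraph (ZMod m)).edgeSet ∧
    IsRSP (⊤ : SimpleGraph (ZMod m)) (KmRel m) ∧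
    (m ≠ 4 → IsFinestRSP (⊤ : SimpleGraph (ZMod m)) (KmRel m)) := by
  exact ⟨phi_disjoint hm, phi_union hm, km_isRSP hm, fun hm4 => km_finest hm hm4⟩
end

section
/- For all m > 3 there exists a nontrivial RSP-relation on the edge set of the complete graph K_m, i.e., an RSP-relation with at least two equivalence classes. -/
open SimpleGraph

variable {V : Type*}

/-- Parity of a vertex of `Fin m`. -/
def par {m : ℕ} (v : Fin m) : ZMod 2 := (v.val : ZMod 2)

/-- Parity coloring of edges. -/
def ecol {m : ℕ} : Sym2 (Fin m) → ZMod 2 :=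
  Sym2.lift ⟨fun a b => par a + par b, fun _ _ => add_comm _ _⟩

@[simp] lemma ecol_mk {m : ℕ} (a b : Fin m) : ecol s(a, b) = par a + par b := rfl

lemma existsW {m : ℕ} (x u v a b : Fin m) (t : ZMod 2) (hab : a ≠ b)
    (hpa : par a = t) (hpb : par b = t) (hx : par x ≠ t)
    (hv : par v ≠ t) : ∃ w : Fin m, w ≠ x ∧ w ≠ u ∧ w ≠ v ∧ par w = t := by
  by_cases h : a = u
  · exact ⟨b, fun e => hx (e ▸ hpb), fun e => hab (h.trans e.symm), fun e => hv (e ▸ hpb), hpb⟩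
  · exact ⟨a, fun e => hx (e ▸ hpa), h, fun e => hv (e ▸ hpa), hpa⟩

/-- For all `m > 3` there is a nontrivial RSP-relation (at least two classes) on `E(K_m)`. -/
theorem stmt8 (m : ℕ) (hm : 3 < m) :
    ∃ R : Sym2 (Fin m) → Sym2 (Fin m) → Prop,
      IsRSP (⊤ : SimpleGraph (Fin m)) R ∧
      ∃ e ∈ (⊤ : SimpleGraph (Fin m)).edgeSet, ∃ f ∈ (⊤ : SimpleGraph (Fin m)).edgeSet,
        ¬ R e f := by
  classical
  set G : SimpleGraph (Fin m) := ⊤ with hG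
  refine ⟨fun e f => e ∈ G.edgeSet ∧ f ∈ G.edgeSet ∧ ecol e = ecol f, ⟨⟨?_, ?_, ?_, ?_, ?_⟩, ?_⟩, ?_⟩
  · exact fun e he => ⟨he, he, rfl⟩
  · rintro e f ⟨he, hf, h⟩; exact ⟨hf, he, h.symm⟩
  · rintro e f g ⟨he, hf, h⟩ ⟨_, hg, h'⟩; exact ⟨he, hg, h.trans h'⟩
  · rintro e f ⟨he, _, _⟩; exact he
  · rintro e f ⟨_, hf, _⟩; exact hf
  · intro x y z hxy hxz hyz hR
    have exy : s(x, y) ∈ G.edgeSet := hxy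
    have exz : s(x, z) ∈ G.edgeSet := hxz
    have hc : par x + par y ≠ par x + par z := by
      intro h
      exact hR ⟨exy, exz, by simpa using h⟩
    have hne : par y ≠ par z := fun h => hc (by rw [h])
    set t : ZMod 2 := par x + par y + par z with ht
    have hxt : par x ≠ t := by
      have h1 : par y + par z = 1 := by revert hne; generalize par y = a; generalize par z = b; revert a b; decide
      have : t = par x + 1 := by rw [ht, add_assoc, h1]
      rw [this]
      generalize par x = a; revert a; decide
    -- which of y, z has parity t
    have hyz' : t = par y ∨ t = par z := by
      have : ∀ a b c : ZMod 2, a ≠ b → c = a ∨ c = b := by decide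
      exact this _ _ t hne
    -- candidates with parity t
    obtain ⟨a, b, hab, hpa, hpb⟩ :
        ∃ a b : Fin m, a ≠ b ∧ par a = t ∧ par b = t := by
      have h01 : t = 0 ∨ t = 1 := by generalize t = s; revert s; decide
      rcases h01 with h | h
      · refine ⟨⟨0, by omega⟩, ⟨2, by omega⟩, ?_, ?_, ?_⟩
        · intro e; simpa [Fin.ext_iff] using e
        · simp [par, h]
        · rw [h]; show ((2 : ℕ) : ZMod 2) = 0; decide
      · refine ⟨⟨1, by omega⟩, ⟨3, by omega⟩, ?_, ?_, ?_⟩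
        · intro e; simpa [Fin.ext_iff] using e
        · rw [h]; show ((1 : ℕ) : ZMod 2) = 1; decide
        · rw [h]; show ((3 : ℕ) : ZMod 2) = 1; decide
    have key1 : ∀ c1 c2 c3 : ZMod 2, c3 + (c1 + c2 + c3) = c1 + c2 := by decide
    have key2 : ∀ c1 c2 c3 : ZMod 2, c2 + (c1 + c2 + c3) = c1 + c3 := by decide
    rcases hyz' with h | h
    · obtain ⟨w, hwx, hwy, hwz, hwt⟩ :=
        existsW x y z a b t hab hpa hpb hxt (fun e => hne (h.symm.trans e.symm))
      refine ⟨w, hwx, hwy, hwz, ?_, ?_, ⟨exy, ?_, ?_⟩, ⟨exz, ?_, ?_⟩⟩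
      · exact fun e => hwy e.symm
      · exact fun e => hwz e.symm
      · exact Ne.symm hwz
      · simp only [ecol_mk, hwt, ht]; exact (key1 _ _ _).symm
      · exact Ne.symm hwy
      · simp only [ecol_mk, hwt, ht]; exact (key2 _ _ _).symm
    · obtain ⟨w, hwx, hwz, hwy, hwt⟩ :=
        existsW x z y a b t hab hpa hpb hxt (fun e => hne (e.trans h))
      refine ⟨w, hwx, hwy, hwz, ?_, ?_, ⟨exy, ?_, ?_⟩, ⟨exz, ?_, ?_⟩⟩
      · exact fun e => hwy e.symm
      · exact fun e => hwz e.symm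
      · exact Ne.symm hwz
      · simp only [ecol_mk, hwt, ht]; exact (key1 _ _ _).symm
      · exact Ne.symm hwy
      · simp only [ecol_mk, hwt, ht]; exact (key2 _ _ _).symm
  · -- nontriviality: edges s(0,2) and s(0,1)
    have h02 : (⟨0, by omega⟩ : Fin m) ≠ ⟨2, by omega⟩ := by intro e; simpa [Fin.ext_iff] using e
    have h01 : (⟨0, by omega⟩ : Fin m) ≠ ⟨1, by omega⟩ := by intro e; simpa [Fin.ext_iff] using e
    refine ⟨s(⟨0, by omega⟩, ⟨2, by omega⟩), h02, s(⟨0, by omega⟩, ⟨1, by omega⟩), h01, ?_⟩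
    rintro ⟨-, -, h⟩
    simp only [ecol_mk] at h
    have : ((0 : ℕ) : ZMod 2) + ((2 : ℕ) : ZMod 2) = ((0 : ℕ) : ZMod 2) + ((1 : ℕ) : ZMod 2) := h
    revert this; decide
end

section
/- For n ≥ 5, consider K_n with vertex set {0,…,n−1}, and let φ be the union of the edge set of the subgraph induced on {0,1} (i.e., the single edge [0,1]) and the edge set of the subgraph induced on {2,…,n−1}. Then the equivalence relation R with the two classes φ and its complement (all edges between {0,1} and {2,…,n−1}) is a finest RSP-relation on E(K_n). -/
open SimpleGraph

variable {V : Type*}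

/-- Membership in the class `φ`: both endpoints in `{0,1}` or both in `{2,…,n-1}`. -/
def sameSideKn (n : ℕ) (e : Sym2 (Fin n)) : Prop :=
  ∃ a b : Fin n, e = s(a, b) ∧ ((a.val ≤ 1 ∧ b.val ≤ 1) ∨ (2 ≤ a.val ∧ 2 ≤ b.val))

lemma sameSide_iff' (n : ℕ) (a b : Fin n) :
    sameSideKn n s(a,b) ↔ ((a.val ≤ 1 ∧ b.val ≤ 1) ∨ (2 ≤ a.val ∧ 2 ≤ b.val)) := by
  constructor
  · rintro ⟨c, d, h, hc⟩
    rcases Sym2.eq_iff.mp h with ⟨rfl, rfl⟩ | ⟨rfl, rfl⟩ <;> tauto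
  · exact fun h => ⟨a, b, rfl, h⟩

lemma exists_partner' {n : ℕ} (hn : 5 ≤ n) (p : Fin n) :
    ∃ w : Fin n, w ≠ p ∧ (w.val ≤ 1 ↔ p.val ≤ 1) := by
  by_cases hp : p.val ≤ 1
  · exact ⟨⟨1 - p.val, by omega⟩, by
      intro h; have := congrArg Fin.val h; simp at this; omega, by simp; omega⟩
  · by_cases hp2 : p.val = 2
    · exact ⟨⟨3, by omega⟩, by
        intro h; have := congrArg Fin.val h; simp at this; omega, by simp; omega⟩
    · exact ⟨⟨2, by omega⟩, by
        intro h; have := congrArg Fin.val h; simp at this; omega, by simp; omega⟩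

set_option maxHeartbeats 1000000 in
/-- For `n ≥ 5`, the two-class relation on `E(K_n)` with classes `φ = E(⟨{0,1}⟩) ∪ E(⟨{2,…,n-1}⟩)`
and its complement is a finest RSP-relation. -/
theorem stmt9 (n : ℕ) (hn : 5 ≤ n) :
    IsFinestRSP (⊤ : SimpleGraph (Fin n))
      (fun e f => e ∈ (⊤ : SimpleGraph (Fin n)).edgeSet ∧
        f ∈ (⊤ : SimpleGraph (Fin n)).edgeSet ∧ (sameSideKn n e ↔ sameSideKn n f)) := by
  have vne : ∀ {a b : Fin n}, a.val ≠ b.val → a ≠ b :=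
    fun h hh => h (congrArg Fin.val hh)
  obtain ⟨v0, hv0⟩ : ∃ v : Fin n, v.val = 0 := ⟨⟨0, by omega⟩, rfl⟩
  obtain ⟨v1, hv1⟩ : ∃ v : Fin n, v.val = 1 := ⟨⟨1, by omega⟩, rfl⟩
  obtain ⟨v2, hv2⟩ : ∃ v : Fin n, v.val = 2 := ⟨⟨2, by omega⟩, rfl⟩
  obtain ⟨v3, hv3⟩ : ∃ v : Fin n, v.val = 3 := ⟨⟨3, by omega⟩, rfl⟩
  obtain ⟨v4, hv4⟩ : ∃ v : Fin n, v.val = 4 := ⟨⟨4, by omega⟩, rfl⟩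
  constructor
  · -- R is an RSP relation
    constructor
    · exact ⟨fun e he => ⟨he, he, Iff.rfl⟩,
        fun h => ⟨h.2.1, h.1, h.2.2.symm⟩,
        fun h1 h2 => ⟨h1.1, h2.2.1, h1.2.2.trans h2.2.2⟩,
        fun h => h.1, fun h => h.2.1⟩
    · intro x y z hxy hxz hyz hnR
      have hxy' : x ≠ y := by simpa using hxy
      have hxz' : x ≠ z := by simpa using hxz
      have hexy : s(x,y) ∈ (⊤ : SimpleGraph (Fin n)).edgeSet := by
        rw [mem_edgeSet, top_adj]; exact hxy'
      have hexz : s(x,z) ∈ (⊤ : SimpleGraph (Fin n)).edgeSet := by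
        rw [mem_edgeSet, top_adj]; exact hxz'
      have hniff : ¬ (sameSideKn n s(x,y) ↔ sameSideKn n s(x,z)) :=
        fun h => hnR ⟨hexy, hexz, h⟩
      rw [sameSide_iff', sameSide_iff'] at hniff
      by_cases hA : (x.val ≤ 1 ∧ y.val ≤ 1) ∨ (2 ≤ x.val ∧ 2 ≤ y.val)
      · have hB : ¬ ((x.val ≤ 1 ∧ z.val ≤ 1) ∨ (2 ≤ x.val ∧ 2 ≤ z.val)) := by tauto
        obtain ⟨w, hwz, hwiff⟩ := exists_partner' hn z
        have hwx : w ≠ x := vne (by omega)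
        have hwy : w ≠ y := vne (by omega)
        have hezw : s(z,w) ∈ (⊤ : SimpleGraph (Fin n)).edgeSet := by
          rw [mem_edgeSet, top_adj]; exact Ne.symm hwz
        have heyw : s(y,w) ∈ (⊤ : SimpleGraph (Fin n)).edgeSet := by
          rw [mem_edgeSet, top_adj]; exact Ne.symm hwy
        refine ⟨w, hwx, hwy, hwz, (top_adj _ _).mpr (Ne.symm hwy), (top_adj _ _).mpr (Ne.symm hwz),
          ⟨hexy, hezw, ?_⟩, ⟨hexz, heyw, ?_⟩⟩
        · rw [sameSide_iff', sameSide_iff']; omega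
        · rw [sameSide_iff', sameSide_iff']; omega
      · have hB : (x.val ≤ 1 ∧ z.val ≤ 1) ∨ (2 ≤ x.val ∧ 2 ≤ z.val) := by tauto
        obtain ⟨w, hwy, hwiff⟩ := exists_partner' hn y
        have hwx : w ≠ x := vne (by omega)
        have hwz : w ≠ z := vne (by omega)
        have hezw : s(z,w) ∈ (⊤ : SimpleGraph (Fin n)).edgeSet := by
          rw [mem_edgeSet, top_adj]; exact Ne.symm hwz
        have heyw : s(y,w) ∈ (⊤ : SimpleGraph (Fin n)).edgeSet := by
          rw [mem_edgeSet, top_adj]; exact Ne.symm hwy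
        refine ⟨w, hwx, hwy, hwz, (top_adj _ _).mpr (Ne.symm hwy), (top_adj _ _).mpr (Ne.symm hwz),
          ⟨hexy, hezw, ?_⟩, ⟨hexz, heyw, ?_⟩⟩
        · rw [sameSide_iff', sameSide_iff']; omega
        · rw [sameSide_iff', sameSide_iff']; omega
  · -- finest
    intro S hS hfine
    obtain ⟨hSeq, hSsq⟩ := hS
    have hL : ∀ a b i : Fin n, 2 ≤ a.val → 2 ≤ b.val → a ≠ b → i.val ≤ 1 →
        ∃ w : Fin n, w.val ≤ 1 ∧ w ≠ i ∧ S s(a,b) s(i,w) ∧ S s(a,i) s(b,w) := by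
      intro a b i ha hb hab hi
      have hadj1 : (⊤ : SimpleGraph (Fin n)).Adj a b := (top_adj _ _).mpr hab
      have hadj2 : (⊤ : SimpleGraph (Fin n)).Adj a i := (top_adj _ _).mpr (vne (by omega))
      have hbi : b ≠ i := vne (by omega)
      have hnS : ¬ S s(a,b) s(a,i) := by
        intro hcon
        obtain ⟨_, _, hiff⟩ := hfine _ _ hcon
        rw [sameSide_iff', sameSide_iff'] at hiff
        omega
      obtain ⟨w, hw1, hw2, hw3, _, _, hS1, hS2⟩ := hSsq a b i hadj1 hadj2 hbi hnS
      have hw4 : w.val ≤ 1 := by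
        obtain ⟨_, _, hiff⟩ := hfine _ _ hS1
        rw [sameSide_iff', sameSide_iff'] at hiff
        omega
      exact ⟨w, hw4, hw3, hS1, hS2⟩
    have hφ : ∀ a b : Fin n, 2 ≤ a.val → 2 ≤ b.val → a ≠ b → S s(a,b) s(v0,v1) := by
      intro a b ha hb hab
      obtain ⟨w, hw1, hw2, hS1, _⟩ := hL a b v0 ha hb hab (by omega)
      have hwv : w.val ≠ v0.val := fun h => hw2 (Fin.val_injective h)
      have : w = v1 := Fin.val_injective (by omega)
      rwa [this] at hS1
    have hX0 : ∀ a b : Fin n, 2 ≤ a.val → 2 ≤ b.val → a ≠ b → S s(a,v0) s(b,v1) := by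
      intro a b ha hb hab
      obtain ⟨w, hw1, hw2, _, hS2⟩ := hL a b v0 ha hb hab (by omega)
      have hwv : w.val ≠ v0.val := fun h => hw2 (Fin.val_injective h)
      have : w = v1 := Fin.val_injective (by omega)
      rwa [this] at hS2
    have hX1 : ∀ a b : Fin n, 2 ≤ a.val → 2 ≤ b.val → a ≠ b → S s(a,v1) s(b,v0) := by
      intro a b ha hb hab
      obtain ⟨w, hw1, hw2, _, hS2⟩ := hL a b v1 ha hb hab (by omega)
      have hwv : w.val ≠ v1.val := fun h => hw2 (Fin.val_injective h)
      have : w = v0 := Fin.val_injective (by omega)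
      rwa [this] at hS2
    have hv0chain : ∀ p q : Fin n, 2 ≤ p.val → 2 ≤ q.val → S s(v0,p) s(v0,q) := by
      intro p q hp hq
      by_cases hpq : p = q
      · subst hpq
        exact hSeq.refl _ (by rw [mem_edgeSet, top_adj]; exact vne (by omega))
      · have hpq' : p.val ≠ q.val := fun h => hpq (Fin.val_injective h)
        have hd : ∃ d : Fin n, 2 ≤ d.val ∧ d ≠ p ∧ d ≠ q := by
          by_cases h2 : p.val ≠ 2 ∧ q.val ≠ 2
          · exact ⟨v2, by omega, vne (by omega), vne (by omega)⟩
          · by_cases h3 : p.val ≠ 3 ∧ q.val ≠ 3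
            · exact ⟨v3, by omega, vne (by omega), vne (by omega)⟩
            · exact ⟨v4, by omega, vne (by omega), vne (by omega)⟩
        obtain ⟨d, hd2, hdp, hdq⟩ := hd
        have h1 : S s(p,v0) s(d,v1) := hX0 p d hp hd2 (Ne.symm hdp)
        have h2 : S s(q,v0) s(d,v1) := hX0 q d hq hd2 (Ne.symm hdq)
        rw [Sym2.eq_swap (a := v0) (b := p), Sym2.eq_swap (a := v0) (b := q)]
        exact hSeq.trans h1 (hSeq.symm h2)
    have hcross1 : ∀ p : Fin n, 2 ≤ p.val → S s(v1,p) s(v0,v2) := by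
      intro p hp
      have hc : ∃ c : Fin n, 2 ≤ c.val ∧ c ≠ p := by
        by_cases h3 : p.val = 3
        · exact ⟨v4, by omega, vne (by omega)⟩
        · exact ⟨v3, by omega, vne (by omega)⟩
      obtain ⟨c, hc2, hcp⟩ := hc
      have h1 : S s(p,v1) s(c,v0) := hX1 p c hp hc2 (Ne.symm hcp)
      have h2 : S s(v0,c) s(v0,v2) := hv0chain c v2 hc2 (by omega)
      rw [Sym2.eq_swap (a := v1) (b := p)]
      rw [Sym2.eq_swap (a := c) (b := v0)] at h1
      exact hSeq.trans h1 h2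
    have keyCross : ∀ a b : Fin n, a.val ≤ 1 → 2 ≤ b.val → S s(a,b) s(v0,v2) := by
      intro a b ha hb
      by_cases h0 : a.val = 0
      · have : a = v0 := Fin.val_injective (by omega)
        rw [this]
        exact hv0chain b v2 hb (by omega)
      · have : a = v1 := Fin.val_injective (by omega)
        rw [this]
        exact hcross1 b hb
    have keyCrossFull : ∀ a b : Fin n, a ≠ b → ¬ sameSideKn n s(a,b) → S s(a,b) s(v0,v2) := by
      intro a b hab hns
      rw [sameSide_iff'] at hns
      have hb := b.isLt
      have ha := a.isLt
      have : (a.val ≤ 1 ∧ 2 ≤ b.val) ∨ (2 ≤ a.val ∧ b.val ≤ 1) := by omega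
      rcases this with ⟨h1, h2⟩ | ⟨h1, h2⟩
      · exact keyCross a b h1 h2
      · rw [Sym2.eq_swap (a := a) (b := b)]
        exact keyCross b a h2 h1
    have keySame : ∀ a b : Fin n, a ≠ b → sameSideKn n s(a,b) → S s(a,b) s(v0,v1) := by
      intro a b hab hs
      rw [sameSide_iff'] at hs
      have hab' : a.val ≠ b.val := fun h => hab (Fin.val_injective h)
      rcases hs with ⟨ha, hb⟩ | ⟨ha, hb⟩
      · by_cases h0 : a.val = 0
        · have ha0 : a = v0 := Fin.val_injective (by omega)
          have hb1 : b = v1 := Fin.val_injective (by omega)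
          rw [ha0, hb1]
          exact hSeq.refl _ (by rw [mem_edgeSet, top_adj]; exact vne (by omega))
        · have ha1 : a = v1 := Fin.val_injective (by omega)
          have hb0 : b = v0 := Fin.val_injective (by omega)
          rw [ha1, hb0]
          rw [Sym2.eq_swap (a := v1) (b := v0)]
          exact hSeq.refl _ (by rw [mem_edgeSet, top_adj]; exact vne (by omega))
      · exact hφ a b ha hb hab
    intro e f
    induction e using Sym2.ind with
    | _ a b =>
      induction f using Sym2.ind with
      | _ c d =>
        rintro ⟨he, hf, hiff⟩
        have hab : a ≠ b := by
          rw [mem_edgeSet, top_adj] at he; exact he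
        have hcd : c ≠ d := by
          rw [mem_edgeSet, top_adj] at hf; exact hf
        by_cases hs : sameSideKn n s(a,b)
        · exact hSeq.trans (keySame a b hab hs)
            (hSeq.symm (keySame c d hcd (hiff.mp hs)))
        · exact hSeq.trans (keyCrossFull a b hab hs)
            (hSeq.symm (keyCrossFull c d hcd (fun h => hs (hiff.mpr h))))
end

section
/- For all m, n ≥ 2 there exists a nontrivial RSP-relation on the edge set of the complete bipartite graph K_{m,n}. -/
open SimpleGraph

variable {V : Type*}

/-- For all `m, n ≥ 2` there is a nontrivial RSP-relation on `E(K_{m,n})`. -/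
theorem stmt10 (m n : ℕ) (hm : 2 ≤ m) (hn : 2 ≤ n) :
    ∃ R : Sym2 (Fin m ⊕ Fin n) → Sym2 (Fin m ⊕ Fin n) → Prop,
      IsRSP (completeBipartiteGraph (Fin m) (Fin n)) R ∧
      ∃ e ∈ (completeBipartiteGraph (Fin m) (Fin n)).edgeSet,
        ∃ f ∈ (completeBipartiteGraph (Fin m) (Fin n)).edgeSet, ¬ R e f := by
  classical
  set G := completeBipartiteGraph (Fin m) (Fin n) with hG
  let g : Fin m ⊕ Fin n → ℕ := Sum.elim Fin.val Fin.val
  let c : Sym2 (Fin m ⊕ Fin n) → ℕ :=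
    Sym2.lift ⟨fun x y => (g x + g y) % 2, fun x y => by show (g x + g y) % 2 = (g y + g x) % 2; rw [Nat.add_comm]⟩
  have hc : ∀ x y, c s(x, y) = (g x + g y) % 2 := fun x y => rfl
  refine ⟨fun e f => e ∈ G.edgeSet ∧ f ∈ G.edgeSet ∧ c e = c f,
    ⟨⟨fun e he => ⟨he, he, rfl⟩,
      fun h => ⟨h.2.1, h.1, h.2.2.symm⟩,
      fun h1 h2 => ⟨h1.1, h2.2.1, h1.2.2.trans h2.2.2⟩,
      fun h => h.1, fun h => h.2.1⟩, ?_⟩, ?_⟩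
  · intro x y z hxy hxz hyz hR
    have hcne : c s(x, y) ≠ c s(x, z) := fun h =>
      hR ⟨G.mem_edgeSet.2 hxy, G.mem_edgeSet.2 hxz, h⟩
    rcases x with a | b
    · -- x = inl a, so y, z on the right
      rcases y with a' | b
      · simp [hG] at hxy
      rcases z with a' | b'
      · simp [hG] at hxz
      have hbb' : b.val % 2 ≠ b'.val % 2 := by
        intro h; apply hcne; rw [hc, hc]; simp only [g, Sum.elim_inl, Sum.elim_inr]; omega
      refine ⟨Sum.inl (if a.val % 2 = 0 then ⟨1, hm⟩ else ⟨0, by omega⟩), ?_, ?_, ?_, ?_, ?_, ?_, ?_⟩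
      · intro h
        have := Sum.inl.inj h
        have : (if a.val % 2 = 0 then (⟨1, hm⟩ : Fin m) else ⟨0, by omega⟩).val = a.val := by
          rw [this]
        split at this <;> simp_all <;> omega
      · simp
      · simp
      · simp [hG]
      · simp [hG]
      · refine ⟨G.mem_edgeSet.2 hxy, ?_, ?_⟩
        · rw [SimpleGraph.mem_edgeSet]; simp [hG]
        · rw [hc, hc]; simp only [g, Sum.elim_inl, Sum.elim_inr]
          split <;> simp <;> omega
      · refine ⟨G.mem_edgeSet.2 hxz, ?_, ?_⟩
        · rw [SimpleGraph.mem_edgeSet]; simp [hG]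
        · rw [hc, hc]; simp only [g, Sum.elim_inl, Sum.elim_inr]
          split <;> simp <;> omega
    · -- x = inr b, so y, z on the left
      rcases y with a | b'
      case inr => simp [hG] at hxy
      rcases z with a' | b'
      case inr => simp [hG] at hxz
      have haa' : a.val % 2 ≠ a'.val % 2 := by
        intro h; apply hcne; rw [hc, hc]; simp only [g, Sum.elim_inl, Sum.elim_inr]; omega
      refine ⟨Sum.inr (if b.val % 2 = 0 then ⟨1, hn⟩ else ⟨0, by omega⟩), ?_, ?_, ?_, ?_, ?_, ?_, ?_⟩
      · intro h
        have := Sum.inr.inj h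
        have : (if b.val % 2 = 0 then (⟨1, hn⟩ : Fin n) else ⟨0, by omega⟩).val = b.val := by
          rw [this]
        split at this <;> simp_all <;> omega
      · simp
      · simp
      · simp [hG]
      · simp [hG]
      · refine ⟨G.mem_edgeSet.2 hxy, ?_, ?_⟩
        · rw [SimpleGraph.mem_edgeSet]; simp [hG]
        · rw [hc, hc]; simp only [g, Sum.elim_inl, Sum.elim_inr]
          split <;> simp <;> omega
      · refine ⟨G.mem_edgeSet.2 hxz, ?_, ?_⟩
        · rw [SimpleGraph.mem_edgeSet]; simp [hG]
        · rw [hc, hc]; simp only [g, Sum.elim_inl, Sum.elim_inr]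
          split <;> simp <;> omega
  · refine ⟨s(Sum.inl ⟨0, by omega⟩, Sum.inr ⟨0, by omega⟩), ?_,
      s(Sum.inl ⟨0, by omega⟩, Sum.inr ⟨1, hn⟩), ?_, ?_⟩
    · rw [SimpleGraph.mem_edgeSet]; simp [hG]
    · rw [SimpleGraph.mem_edgeSet]; simp [hG]
    · rintro ⟨-, -, h⟩
      rw [hc, hc] at h
      simp only [g, Sum.elim_inl, Sum.elim_inr] at h
      omega
end

section
/- Let V(K_{m,m}) = V(K_2) × V(K_m) with edges [x,y] whenever p₁(x) ≠ p₁(y), and let S be an RSP-relation on E(K_m). Define R on E(K_{m,m}) by (e,f) ∈ R iff either |p₂(e)| = |p₂(f)| = 1, or |p₂(e)| = |p₂(f)| = 2 and (p₂(e), p₂(f)) ∈ S. Then R is an RSP-relation on E(K_{m,m}). -/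
open SimpleGraph

variable {V : Type*}

/-- `K_{m,m}` realized on the vertex set `Fin 2 × Fin m`: two vertices are adjacent iff
they differ in the first coordinate. -/
def Kmm (m : ℕ) : SimpleGraph (Fin 2 × Fin m) where
  Adj x y := x.1 ≠ y.1
  symm := ⟨fun _ _ h => h.symm⟩
  loopless := ⟨fun _ h => h rfl⟩

/-- `|p₂(e)| = 1`: the endpoints of `e` agree in the second coordinate. -/
def diagEdge (m : ℕ) (e : Sym2 (Fin 2 × Fin m)) : Prop :=
  ∃ u v : Fin 2 × Fin m, e = s(u, v) ∧ u.2 = v.2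

/-- Lifting an RSP-relation `S` on `E(K_m)` to `E(K_{m,m})`: edges with `|p₂(e)| = 1` form
one class; other edges are related iff their second projections are `S`-related. -/
def KmmRel (m : ℕ) (S : Sym2 (Fin m) → Sym2 (Fin m) → Prop)
    (e f : Sym2 (Fin 2 × Fin m)) : Prop :=
  e ∈ (Kmm m).edgeSet ∧ f ∈ (Kmm m).edgeSet ∧
    ((diagEdge m e ∧ diagEdge m f) ∨
     (¬ diagEdge m e ∧ ¬ diagEdge m f ∧
       S (Sym2.map Prod.snd e) (Sym2.map Prod.snd f)))

/-!
`p₂` maps `E(K_{m,m})` onto `E(K_m)` together with the loops `s(a, a)`, and `KmmRel m S` is the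
pullback of `S` extended by the loops as one additional class. That extension is again an
equivalence with the square property, now also for pairs of sides involving a loop, and a
square `a b d c` of it lifts to the square `x y w z` of `K_{m,m}` with `w = (p₁ x, d)`.
-/

def Sym2.extendDiag {α : Type*} (S : Sym2 α → Sym2 α → Prop) (e f : Sym2 α) : Prop :=
  (e.IsDiag ∧ f.IsDiag) ∨ (¬ e.IsDiag ∧ ¬ f.IsDiag ∧ S e f)

namespace Sym2.extendDiag

variable {α : Type*} {S : Sym2 α → Sym2 α → Prop}

lemma refl (hS : IsEquivOn S (⊤ : SimpleGraph α).edgeSet) (e : Sym2 α) : extendDiag S e e := by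
  by_cases he : e.IsDiag
  · exact .inl ⟨he, he⟩
  · exact .inr ⟨he, he, hS.refl e (by simpa [SimpleGraph.edgeSet_top] using he)⟩

lemma symm (hS : IsEquivOn S (⊤ : SimpleGraph α).edgeSet) {e f : Sym2 α} :
    extendDiag S e f → extendDiag S f e
  | .inl ⟨he, hf⟩ => .inl ⟨hf, he⟩
  | .inr ⟨he, hf, h⟩ => .inr ⟨hf, he, hS.symm h⟩

lemma trans (hS : IsEquivOn S (⊤ : SimpleGraph α).edgeSet) {e f g : Sym2 α} :
    extendDiag S e f → extendDiag S f g → extendDiag S e g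
  | .inl ⟨he, _⟩, .inl ⟨_, hg⟩ => .inl ⟨he, hg⟩
  | .inl ⟨_, hf⟩, .inr ⟨hf', _⟩ => absurd hf hf'
  | .inr ⟨_, hf', _⟩, .inl ⟨hf, _⟩ => absurd hf hf'
  | .inr ⟨he, _, h⟩, .inr ⟨_, hg, h'⟩ => .inr ⟨he, hg, hS.trans h h'⟩

/-- A pair `s(a, a)`, `s(a, c)` is completed by the degenerate square `a a c c`. -/
lemma exists_square (hS : IsRSP (⊤ : SimpleGraph α) S) {a b c : α}
    (h : ¬ extendDiag S s(a, b) s(a, c)) :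
    ∃ d, extendDiag S s(a, b) s(c, d) ∧ extendDiag S s(a, c) s(b, d) := by
  have hrefl := refl hS.1
  by_cases hab : a = b
  · subst hab
    exact ⟨c, .inl ⟨rfl, rfl⟩, hrefl _⟩
  by_cases hac : a = c
  · subst hac
    exact ⟨b, hrefl _, .inl ⟨rfl, rfl⟩⟩
  have hbc : b ≠ c := by rintro rfl; exact h (hrefl _)
  have hS' : ¬ S s(a, b) s(a, c) := fun hs => h (.inr ⟨by simpa, by simpa, hs⟩)
  obtain ⟨d, -, hdb, hdc, -, -, hbd, hcd⟩ := hS.2 a b c hab hac hbc hS'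
  exact ⟨d, .inr ⟨by simpa, by simpa [eq_comm] using hdc, hbd⟩,
    .inr ⟨by simpa, by simpa [eq_comm] using hdb, hcd⟩⟩

end Sym2.extendDiag

lemma diagEdge_iff {m : ℕ} (e : Sym2 (Fin 2 × Fin m)) :
    diagEdge m e ↔ (e.map Prod.snd).IsDiag := by
  induction e using Sym2.ind with
  | _ u v =>
    simp only [diagEdge, Sym2.map_mk, Sym2.mk_isDiag_iff, Sym2.eq_iff]
    constructor
    · rintro ⟨a, b, ⟨rfl, rfl⟩ | ⟨rfl, rfl⟩, hab⟩
      exacts [hab, hab.symm]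
    · exact fun h => ⟨u, v, .inl ⟨rfl, rfl⟩, h⟩

lemma kmmRel_iff {m : ℕ} {S : Sym2 (Fin m) → Sym2 (Fin m) → Prop} {e f : Sym2 (Fin 2 × Fin m)} :
    KmmRel m S e f ↔ e ∈ (Kmm m).edgeSet ∧ f ∈ (Kmm m).edgeSet ∧
      Sym2.extendDiag S (e.map Prod.snd) (f.map Prod.snd) := by
  simp only [KmmRel, Sym2.extendDiag, diagEdge_iff]

lemma isEquivOn_kmmRel {m : ℕ} {S : Sym2 (Fin m) → Sym2 (Fin m) → Prop}
    (hS : IsEquivOn S (⊤ : SimpleGraph (Fin m)).edgeSet) :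
    IsEquivOn (KmmRel m S) (Kmm m).edgeSet where
  refl e he := kmmRel_iff.2 ⟨he, he, .refl hS _⟩
  symm h := by
    obtain ⟨he, hf, h⟩ := kmmRel_iff.1 h
    exact kmmRel_iff.2 ⟨hf, he, .symm hS h⟩
  trans h h' := by
    obtain ⟨he, -, h⟩ := kmmRel_iff.1 h
    obtain ⟨-, hg, h'⟩ := kmmRel_iff.1 h'
    exact kmmRel_iff.2 ⟨he, hg, .trans hS h h'⟩
  mem_left h := (kmmRel_iff.1 h).1
  mem_right h := (kmmRel_iff.1 h).2.1

/-- The lift to `E(K_{m,m})` of an RSP-relation on `E(K_m)` is an RSP-relation. -/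
theorem stmt11 (m : ℕ) (S : Sym2 (Fin m) → Sym2 (Fin m) → Prop)
    (hS : IsRSP (⊤ : SimpleGraph (Fin m)) S) :
    IsRSP (Kmm m) (KmmRel m S) := by
  refine ⟨isEquivOn_kmmRel hS.1, fun x y z hxy hxz _ hR => ?_⟩
  have hxy' : s(x, y) ∈ (Kmm m).edgeSet := hxy
  have hxz' : s(x, z) ∈ (Kmm m).edgeSet := hxz
  obtain ⟨d, hyd, hzd⟩ :=
    Sym2.extendDiag.exists_square hS fun h => hR (kmmRel_iff.2 ⟨hxy', hxz', h⟩)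
  have hzw : (Kmm m).Adj z (x.1, d) := Ne.symm hxz
  have hyw : (Kmm m).Adj y (x.1, d) := Ne.symm hxy
  have hR₁ : KmmRel m S s(x, y) s(z, (x.1, d)) := kmmRel_iff.2 ⟨hxy', hzw, hyd⟩
  refine ⟨(x.1, d), ?_, fun h => hxy (by rw [← h]),
    fun h => hxz (by rw [← h]), hyw, hzw, hR₁, kmmRel_iff.2 ⟨hxz', hyw, hzd⟩⟩
  -- `w = x` would make the opposite side `s(z, w)` equal to `s(x, z)`
  intro hw
  exact hR (by rwa [hw, Sym2.eq_swap (a := z)] at hR₁)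
end

section
/- Let G be a graph with an RSP-relation R, let φ be a class of R, and let G_φ^x and G_φ^y be two distinct adjacent φ-layers. Define the graph C whose vertices are the edges [a,b] of G with a ∈ V(G_φ^x), b ∈ V(G_φ^y), and where [a₁,b₁] and [a₂,b₂] are adjacent if they are opposite edges of a square a₁−b₁−b₂−a₂ in G with [a₁,a₂] ∈ E(G_φ^x) and [b₁,b₂] ∈ E(G_φ^y). Then the map f₁ sending [a,b] to a is a locally surjective graph homomorphism from C to G_φ^x, i.e., C is a quasi-cover of G_φ^x. -/
open SimpleGraph

variable {V : Type*}

/-- The graph `C_{G_φ^x, G_φ^y}`: vertices are the edges of `G` joining the `φ`-layer of `x`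
to the `φ`-layer of `y` (encoded as ordered pairs with first endpoint in the layer of `x`);
two such edges are adjacent iff they are opposite edges of a square whose other two opposite
edges lie in `φ`, one in each layer. -/
def coverGraph (G : SimpleGraph V) (φ : Set (Sym2 V)) (x y : V) :
    SimpleGraph {p : V × V //
      (G.deleteEdges φᶜ).Reachable x p.1 ∧ (G.deleteEdges φᶜ).Reachable y p.2 ∧
      G.Adj p.1 p.2} where
  Adj p q :=
    G.Adj p.1.1 q.1.1 ∧ s(p.1.1, q.1.1) ∈ φ ∧ G.Adj p.1.2 q.1.2 ∧ s(p.1.2, q.1.2) ∈ φ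
  symm := ⟨by
    rintro p q ⟨h1, h2, h3, h4⟩
    exact ⟨h1.symm, by rwa [Sym2.eq_swap], h3.symm, by rwa [Sym2.eq_swap]⟩⟩
  loopless := ⟨by
    rintro p ⟨h1, -⟩
    exact G.loopless.irrefl _ h1⟩

/-! An edge `[a, c]` of the layer `G_φ^x` at the endpoint `a` of a cover vertex `[a, b]` lies in
another class than `[a, b]`, since `[a, b]` joins two distinct `φ`-layers. The RSP square property
then closes `a - b - w - c` into a square whose edge `[b, w]` is in `φ`, and `[c, w]` is the
required lift of `c`. -/

variable {G : SimpleGraph V}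

theorem SimpleGraph.deleteEdges_compl_adj {φ : Set (Sym2 V)} {a b : V} :
    (G.deleteEdges φᶜ).Adj a b ↔ G.Adj a b ∧ s(a, b) ∈ φ := by
  simp only [deleteEdges_adj, Set.mem_compl_iff, not_not]

theorem SimpleGraph.notMem_of_adj_of_not_reachable {φ : Set (Sym2 V)} {x y a b : V}
    (hdist : ¬ (G.deleteEdges φᶜ).Reachable x y) (hxa : (G.deleteEdges φᶜ).Reachable x a)
    (hyb : (G.deleteEdges φᶜ).Reachable y b) (hab : G.Adj a b) : s(a, b) ∉ φ := fun habφ =>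
  hdist <| hxa.trans <| (deleteEdges_compl_adj.2 ⟨hab, habφ⟩).reachable.trans hyb.symm

theorem coverGraph_adj_fst {φ : Set (Sym2 V)} {x y : V} {p q}
    (h : (coverGraph G φ x y).Adj p q) : (G.deleteEdges φᶜ).Adj p.val.1 q.val.1 :=
  deleteEdges_compl_adj.2 ⟨h.1, h.2.1⟩

theorem IsRSP.exists_square_of_not_rel {R : Sym2 V → Sym2 V → Prop} (hR : IsRSP G R)
    {a b c : V} (hab : G.Adj a b) (hac : G.Adj a c) (hclass : ¬ R s(a, b) s(a, c)) :
    ∃ w, G.Adj b w ∧ G.Adj c w ∧ R s(a, c) s(b, w) := by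
  have hne : b ≠ c := by
    rintro rfl
    exact hclass (hR.1.refl _ (G.mem_edgeSet.2 hab))
  obtain ⟨w, -, -, -, hbw, hcw, -, hrel⟩ := hR.2 a b c hab hac hne hclass
  exact ⟨w, hbw, hcw, hrel⟩

theorem IsRSP.exists_coverGraph_adj_fst_eq {R : Sym2 V → Sym2 V → Prop} (hR : IsRSP G R)
    {e₀ : Sym2 V} {x y : V} (hdist : ¬ (G.deleteEdges {e | R e₀ e}ᶜ).Reachable x y)
    (p : {p : V × V // (G.deleteEdges {e | R e₀ e}ᶜ).Reachable x p.1 ∧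
      (G.deleteEdges {e | R e₀ e}ᶜ).Reachable y p.2 ∧ G.Adj p.1 p.2})
    {c : V} (hc : (G.deleteEdges {e | R e₀ e}ᶜ).Adj p.val.1 c) :
    ∃ q, (coverGraph G {e | R e₀ e} x y).Adj p q ∧ q.val.1 = c := by
  obtain ⟨⟨a, b⟩, hxa, hyb, hab⟩ := p
  obtain ⟨hac, hacφ⟩ := deleteEdges_compl_adj.1 hc
  have hclass : ¬ R s(a, b) s(a, c) := fun hrel =>
    notMem_of_adj_of_not_reachable hdist hxa hyb hab (hR.1.trans hacφ (hR.1.symm hrel))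
  obtain ⟨w, hbw, hcw, hrel⟩ := hR.exists_square_of_not_rel hab hac hclass
  have hbwφ : s(b, w) ∈ {e | R e₀ e} := hR.1.trans hacφ hrel
  refine ⟨⟨(c, w), hxa.trans hc.reachable, ?_, hcw⟩, ⟨hac, hacφ, hbw, hbwφ⟩, rfl⟩
  exact hyb.trans (deleteEdges_compl_adj.2 ⟨hbw, hbwφ⟩).reachable

theorem stmt12_general (G : SimpleGraph V) (R : Sym2 V → Sym2 V → Prop) (hR : IsRSP G R)
    (e₀ : Sym2 V) (x y : V)
    (hdist : ¬ (G.deleteEdges {e | R e₀ e}ᶜ).Reachable x y) :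
    (∀ p q, (coverGraph G {e | R e₀ e} x y).Adj p q →
      (G.deleteEdges {e | R e₀ e}ᶜ).Adj p.val.1 q.val.1) ∧
    (∀ p (c : V), (G.deleteEdges {e | R e₀ e}ᶜ).Adj p.val.1 c →
      ∃ q, (coverGraph G {e | R e₀ e} x y).Adj p q ∧ q.val.1 = c) :=
  ⟨fun _ _ => coverGraph_adj_fst, fun p _ => hR.exists_coverGraph_adj_fst_eq hdist p⟩

/-- For an RSP-relation `R` on `G`, a class `φ` of `R`, and two distinct adjacent `φ`-layers,
the map `[a,b] ↦ a` is a locally surjective homomorphism from `C_{G_φ^x,G_φ^y}` to the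
layer `G_φ^x`; i.e., `C_{G_φ^x,G_φ^y}` is a quasi-cover of `G_φ^x`. -/
theorem stmt12 (G : SimpleGraph V) (R : Sym2 V → Sym2 V → Prop) (hR : IsRSP G R)
    (e₀ : Sym2 V) (he₀ : e₀ ∈ G.edgeSet) (x y : V)
    (hdist : ¬ (G.deleteEdges {e | R e₀ e}ᶜ).Reachable x y)
    (hadj : ∃ a b : V, (G.deleteEdges {e | R e₀ e}ᶜ).Reachable x a ∧
      (G.deleteEdges {e | R e₀ e}ᶜ).Reachable y b ∧ G.Adj a b) :
    (∀ p q, (coverGraph G {e | R e₀ e} x y).Adj p q →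
      (G.deleteEdges {e | R e₀ e}ᶜ).Adj p.val.1 q.val.1) ∧
    (∀ p (c : V), (G.deleteEdges {e | R e₀ e}ᶜ).Adj p.val.1 c →
      ∃ q, (coverGraph G {e | R e₀ e} x y).Adj p q ∧ q.val.1 = c) :=
  stmt12_general G R hR e₀ x y hdist
end

section
/- Let G be a connected graph with a well-behaved RSP-relation R, φ a class of R, and G_φ^x, G_φ^y two (not necessarily distinct) φ-layers. Then for every vertex u of G_φ^x, the number of neighbors of u via edges not in φ lying in V(G_φ^y) equals the number of such neighbors of x: |N_{G_{φ̄}}(x) ∩ V(G_φ^y)| = |N_{G_{φ̄}}(u) ∩ V(G_φ^y)|. -/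
open SimpleGraph

variable {V : Type*}

/-- `R` is well-behaved on `G`: no `K_{2,3}`-subgraph of `G` (canonical bipartition
`{x,y}, {a,b,c}`) has a forbidden coloring, i.e., edges `[a,x], [x,c], [y,b]` in one class
and the remaining three edges outside that class. -/
def WellBehaved (G : SimpleGraph V) (R : Sym2 V → Sym2 V → Prop) : Prop :=
  ¬ ∃ x y a b c : V, x ≠ y ∧ a ≠ b ∧ a ≠ c ∧ b ≠ c ∧
    G.Adj x a ∧ G.Adj x b ∧ G.Adj x c ∧ G.Adj y a ∧ G.Adj y b ∧ G.Adj y c ∧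
    R s(a, x) s(x, c) ∧ R s(a, x) s(y, b) ∧
    ¬ R s(a, x) s(x, b) ∧ ¬ R s(a, x) s(a, y) ∧ ¬ R s(a, x) s(c, y)

lemma stepLe [Fintype V] (G : SimpleGraph V)
    (R : Sym2 V → Sym2 V → Prop) (hR : IsRSP G R) (hwb : WellBehaved G R)
    (e₀ : Sym2 V) (y : V) {x u : V} (hadj : G.Adj x u) (hxu : R e₀ s(x, u)) :
    Set.ncard {v : V | G.Adj x v ∧ ¬ R e₀ s(x, v) ∧
        (G.deleteEdges {e | R e₀ e}ᶜ).Reachable y v} ≤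
      Set.ncard {v : V | G.Adj u v ∧ ¬ R e₀ s(u, v) ∧
        (G.deleteEdges {e | R e₀ e}ᶜ).Reachable y v} := by
  classical
  set G' := G.deleteEdges {e | R e₀ e}ᶜ with hG'
  set A := {v : V | G.Adj x v ∧ ¬ R e₀ s(x, v) ∧ G'.Reachable y v} with hA
  set B := {v : V | G.Adj u v ∧ ¬ R e₀ s(u, v) ∧ G'.Reachable y v} with hB
  have key : ∀ v ∈ A, ∃ w, w ∈ B ∧ G.Adj v w ∧ R e₀ s(v, w) ∧
      R s(x, v) s(u, w) ∧ w ≠ x := by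
    rintro v ⟨hav, hnv, hyv⟩
    have hne : u ≠ v := fun h => hnv (h ▸ hxu)
    have hnR : ¬ R s(x, u) s(x, v) := fun h => hnv (hR.1.trans hxu h)
    obtain ⟨w, hwx, hwu, hwv, huw, hvw, h1, h2⟩ := hR.2 x u v hadj hav hne hnR
    have hRvw : R e₀ s(v, w) := hR.1.trans hxu h1
    have hnuw : ¬ R e₀ s(u, w) := fun h => hnv (hR.1.trans h (hR.1.symm h2))
    have hG'vw : G'.Adj v w := by
      rw [hG', SimpleGraph.deleteEdges_adj]
      exact ⟨hvw, by simp [hRvw]⟩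
    exact ⟨w, ⟨huw, hnuw, hyv.trans hG'vw.reachable⟩, hvw, hRvw, h2, hwx⟩
  have hf : ∀ v, v ∈ A → (if h : v ∈ A then (key v h).choose else v) ∈ B := by
    intro v hv
    rw [dif_pos hv]
    exact ((key v hv).choose_spec).1
  apply Set.ncard_le_ncard_of_injOn _ hf _ (Set.toFinite B)
  intro v₁ h₁ v₂ h₂ he
  simp only [dif_pos h₁, dif_pos h₂] at he
  by_contra hne
  obtain ⟨hw1B, hadj1, hphi1, hpsi1, hwx1⟩ := (key v₁ h₁).choose_spec
  obtain ⟨hw2B, hadj2, hphi2, hpsi2, _⟩ := (key v₂ h₂).choose_spec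
  set w := (key v₁ h₁).choose with hw
  rw [← he] at hw2B hadj2 hphi2 hpsi2
  apply hwb
  refine ⟨x, w, v₁, u, v₂, hwx1.symm.symm |>.symm, ?_, hne, ?_, h₁.1, hadj, h₂.1,
    hadj1.symm, hw1B.1.symm, hadj2.symm, ?_, ?_, ?_, ?_, ?_⟩
  · exact fun h => h₁.2.1 (h ▸ hxu)
  · exact fun h => h₂.2.1 (h ▸ hxu)
  · rw [Sym2.eq_swap]
    exact hR.1.trans hpsi1 (hR.1.symm hpsi2)
  · rw [Sym2.eq_swap, Sym2.eq_swap (a := w)]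
    exact hpsi1
  · rw [Sym2.eq_swap]
    exact fun h => h₁.2.1 (hR.1.trans hxu (hR.1.symm h))
  · rw [Sym2.eq_swap]
    exact fun h => h₁.2.1 (hR.1.trans hphi1 (hR.1.symm h))
  · rw [Sym2.eq_swap]
    exact fun h => h₁.2.1 (hR.1.trans hphi2 (hR.1.symm h))
lemma stepEq [Fintype V] (G : SimpleGraph V)
    (R : Sym2 V → Sym2 V → Prop) (hR : IsRSP G R) (hwb : WellBehaved G R)
    (e₀ : Sym2 V) (y : V) {x u : V} (hadj : G.Adj x u) (hxu : R e₀ s(x, u)) :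
    Set.ncard {v : V | G.Adj x v ∧ ¬ R e₀ s(x, v) ∧
        (G.deleteEdges {e | R e₀ e}ᶜ).Reachable y v} =
      Set.ncard {v : V | G.Adj u v ∧ ¬ R e₀ s(u, v) ∧
        (G.deleteEdges {e | R e₀ e}ᶜ).Reachable y v} := by
  refine le_antisymm (stepLe G R hR hwb e₀ y hadj hxu)
    (stepLe G R hR hwb e₀ y hadj.symm ?_)
  rwa [Sym2.eq_swap]

theorem stmt14' [Fintype V] (G : SimpleGraph V)
    (R : Sym2 V → Sym2 V → Prop) (hR : IsRSP G R) (hwb : WellBehaved G R)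
    (e₀ : Sym2 V) (x y u : V)
    (hu : (G.deleteEdges {e | R e₀ e}ᶜ).Reachable x u) :
    Set.ncard {v : V | G.Adj x v ∧ ¬ R e₀ s(x, v) ∧
        (G.deleteEdges {e | R e₀ e}ᶜ).Reachable y v} =
      Set.ncard {v : V | G.Adj u v ∧ ¬ R e₀ s(u, v) ∧
        (G.deleteEdges {e | R e₀ e}ᶜ).Reachable y v} := by
  suffices H : ∀ a b : V, (G.deleteEdges {e | R e₀ e}ᶜ).Walk a b →
      Set.ncard {v : V | G.Adj a v ∧ ¬ R e₀ s(a, v) ∧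
        (G.deleteEdges {e | R e₀ e}ᶜ).Reachable y v} =
      Set.ncard {v : V | G.Adj b v ∧ ¬ R e₀ s(b, v) ∧
        (G.deleteEdges {e | R e₀ e}ᶜ).Reachable y v} by
    exact hu.elim (H x u)
  intro a b p
  induction p with
  | nil => rfl
  | cons h p ih =>
    rw [SimpleGraph.deleteEdges_adj] at h
    refine (stepEq G R hR hwb e₀ y h.1 ?_).trans ih
    simpa using h.2

/-- For a well-behaved RSP-relation `R` on a connected graph `G`, a class `φ` of `R` and
(not necessarily distinct) `φ`-layers `G_φ^x`, `G_φ^y`: every vertex `u` of `G_φ^x` has the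
same number of neighbors via `φ̄`-edges inside `V(G_φ^y)` as `x` does. -/
theorem stmt14 [Fintype V] (G : SimpleGraph V) (hG : G.Connected)
    (R : Sym2 V → Sym2 V → Prop) (hR : IsRSP G R) (hwb : WellBehaved G R)
    (e₀ : Sym2 V) (he₀ : e₀ ∈ G.edgeSet) (x y u : V)
    (hu : (G.deleteEdges {e | R e₀ e}ᶜ).Reachable x u) :
    Set.ncard {v : V | G.Adj x v ∧ ¬ R e₀ s(x, v) ∧
        (G.deleteEdges {e | R e₀ e}ᶜ).Reachable y v} =
      Set.ncard {v : V | G.Adj u v ∧ ¬ R e₀ s(u, v) ∧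
        (G.deleteEdges {e | R e₀ e}ᶜ).Reachable y v} := by
  exact stmt14' G R hR hwb e₀ x y u hu
end

section
/- Let G₁, G₂, G be graphs and f₁ : G → G₁, f₂ : G → G₂ locally surjective homomorphisms. Form the graph H on vertex set V(G₁) ∪ V(G₂) (disjoint union) with edge set E(G₁) ∪ E(G₂) together with an edge [x,y] for x ∈ V(G₁), y ∈ V(G₂) whenever there exists g ∈ V(G) with f₁(g) = x and f₂(g) = y. Then the equivalence relation R on E(H) with the two classes φ = E(G₁) ∪ E(G₂) and φ̄ = the set of connecting edges is an RSP-relation. -/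
/-!
At a vertex `x` of `G₁`, take a pure edge `[x, y]` and a connecting edge `[x, z]`, so that
`x = f₁ g` and `z = f₂ g` for some `g`. Local surjectivity of `f₁` lifts `[x, y]` to an edge
`[g, g']` of `G` with `f₁ g' = y`; then `w = f₂ g'` is joined to `y` through `g'` and to `z`
because `f₂` is a homomorphism. In the square `x y w z` the sides `[x, y]`, `[z, w]` are pure
and `[x, z]`, `[y, w]` are connecting. The case `x ∈ V(G₂)` is symmetric.
-/

open SimpleGraph

variable {V : Type*}

/-- The graph `H` on `V(G₁) ⊕ V(G₂)` consisting of `G₁`, `G₂`, and a connecting edge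
`[x, y]` whenever some `g ∈ V(G)` satisfies `f₁ g = x` and `f₂ g = y`. -/
def joinGraph {V1 V2 W : Type*} (G1 : SimpleGraph V1) (G2 : SimpleGraph V2)
    (G : SimpleGraph W) (f1 : W → V1) (f2 : W → V2) : SimpleGraph (V1 ⊕ V2) where
  Adj a b :=
    (∃ u u', a = Sum.inl u ∧ b = Sum.inl u' ∧ G1.Adj u u') ∨
    (∃ v v', a = Sum.inr v ∧ b = Sum.inr v' ∧ G2.Adj v v') ∨
    (∃ g, (a = Sum.inl (f1 g) ∧ b = Sum.inr (f2 g)) ∨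
          (a = Sum.inr (f2 g) ∧ b = Sum.inl (f1 g)))
  symm := by
    constructor
    rintro a b (⟨u, u', rfl, rfl, h⟩ | ⟨v, v', rfl, rfl, h⟩ | ⟨g, ⟨rfl, rfl⟩ | ⟨rfl, rfl⟩⟩)
    · exact Or.inl ⟨u', u, rfl, rfl, h.symm⟩
    · exact Or.inr (Or.inl ⟨v', v, rfl, rfl, h.symm⟩)
    · exact Or.inr (Or.inr ⟨g, Or.inr ⟨rfl, rfl⟩⟩)
    · exact Or.inr (Or.inr ⟨g, Or.inl ⟨rfl, rfl⟩⟩)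
  loopless := by
    constructor
    rintro a (⟨u, u', h1, h2, h⟩ | ⟨v, v', h1, h2, h⟩ | ⟨g, ⟨h1, h2⟩ | ⟨h1, h2⟩⟩)
    · obtain rfl := Sum.inl.inj (h1.symm.trans h2); exact G1.loopless.irrefl u h
    · obtain rfl := Sum.inr.inj (h1.symm.trans h2); exact G2.loopless.irrefl v h
    · exact Sum.inl_ne_inr (h1.symm.trans h2)
    · exact Sum.inr_ne_inl (h1.symm.trans h2)

/-- An edge of a graph on `V1 ⊕ V2` is "pure" if both endpoints lie on the same side. -/
def pureEdge {V1 V2 : Type*} (e : Sym2 (V1 ⊕ V2)) : Prop :=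
  (∃ u u' : V1, e = s(Sum.inl u, Sum.inl u')) ∨ (∃ v v' : V2, e = s(Sum.inr v, Sum.inr v'))

/-- The two-class relation on the edges of a graph `H` on `V1 ⊕ V2`: the class of pure
edges and the class of connecting edges. -/
def crossRel {V1 V2 : Type*} (H : SimpleGraph (V1 ⊕ V2))
    (e f : Sym2 (V1 ⊕ V2)) : Prop :=
  e ∈ H.edgeSet ∧ f ∈ H.edgeSet ∧ (pureEdge e ↔ pureEdge f)

section CrossRel

variable {V1 V2 : Type*}

@[simp]
lemma pureEdge_inl_inl (a b : V1) : pureEdge (V2 := V2) s(.inl a, .inl b) :=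
  .inl ⟨a, b, rfl⟩

@[simp]
lemma pureEdge_inr_inr (a b : V2) : pureEdge (V1 := V1) s(.inr a, .inr b) :=
  .inr ⟨a, b, rfl⟩

@[simp]
lemma not_pureEdge_inl_inr (a : V1) (b : V2) : ¬ pureEdge s(.inl a, .inr b) := by
  rintro (⟨u, u', h⟩ | ⟨v, v', h⟩) <;> simp at h

@[simp]
lemma not_pureEdge_inr_inl (a : V2) (b : V1) : ¬ pureEdge s(.inr a, .inl b) := by
  rw [Sym2.eq_swap]
  exact not_pureEdge_inl_inr b a

lemma isEquivOn_crossRel (H : SimpleGraph (V1 ⊕ V2)) : IsEquivOn (crossRel H) H.edgeSet where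
  refl _ he := ⟨he, he, .rfl⟩
  symm h := ⟨h.2.1, h.1, h.2.2.symm⟩
  trans h h' := ⟨h.1, h'.2.1, h.2.2.trans h'.2.2⟩
  mem_left h := h.1
  mem_right h := h.2.1

end CrossRel

section JoinGraph

variable {V1 V2 W : Type*} {G1 : SimpleGraph V1} {G2 : SimpleGraph V2}
  {G : SimpleGraph W} {f1 : W → V1} {f2 : W → V2}

@[simp]
lemma joinGraph_adj_inl_inl {a b : V1} :
    (joinGraph G1 G2 G f1 f2).Adj (.inl a) (.inl b) ↔ G1.Adj a b := by
  simp [joinGraph]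

@[simp]
lemma joinGraph_adj_inr_inr {a b : V2} :
    (joinGraph G1 G2 G f1 f2).Adj (.inr a) (.inr b) ↔ G2.Adj a b := by
  simp [joinGraph]

@[simp]
lemma joinGraph_adj_inl_inr {a : V1} {b : V2} :
    (joinGraph G1 G2 G f1 f2).Adj (.inl a) (.inr b) ↔ ∃ g, f1 g = a ∧ f2 g = b := by
  simp [joinGraph, eq_comm]

@[simp]
lemma joinGraph_adj_inr_inl {a : V2} {b : V1} :
    (joinGraph G1 G2 G f1 f2).Adj (.inr a) (.inl b) ↔ ∃ g, f1 g = b ∧ f2 g = a := by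
  rw [SimpleGraph.adj_comm, joinGraph_adj_inl_inr]

lemma joinGraph_exists_square
    (hom1 : ∀ g g', G.Adj g g' → G1.Adj (f1 g) (f1 g'))
    (hom2 : ∀ g g', G.Adj g g' → G2.Adj (f2 g) (f2 g'))
    (hsurj1 : ∀ g w, G1.Adj (f1 g) w → ∃ g', G.Adj g g' ∧ f1 g' = w)
    (hsurj2 : ∀ g w, G2.Adj (f2 g) w → ∃ g', G.Adj g g' ∧ f2 g' = w)
    {x y z : V1 ⊕ V2} (hxy : (joinGraph G1 G2 G f1 f2).Adj x y)
    (hxz : (joinGraph G1 G2 G f1 f2).Adj x z)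
    (hpure : pureEdge s(x, y)) (hcross : ¬ pureEdge s(x, z)) :
    ∃ w, w ≠ x ∧ w ≠ y ∧ w ≠ z ∧
      (joinGraph G1 G2 G f1 f2).Adj y w ∧ (joinGraph G1 G2 G f1 f2).Adj z w ∧
      crossRel (joinGraph G1 G2 G f1 f2) s(x, y) s(z, w) ∧
      crossRel (joinGraph G1 G2 G f1 f2) s(x, z) s(y, w) := by
  rcases x with a | a <;> rcases y with b | b <;> rcases z with c | c <;>
    simp only [pureEdge_inl_inl, pureEdge_inr_inr, not_pureEdge_inl_inr,
      not_pureEdge_inr_inl, not_true, not_false_iff] at hpure hcross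
  · obtain ⟨g, rfl, rfl⟩ := joinGraph_adj_inl_inr.1 hxz
    obtain ⟨g', hgg', rfl⟩ := hsurj1 g b (joinGraph_adj_inl_inl.1 hxy)
    have hyw : (joinGraph G1 G2 G f1 f2).Adj (.inl (f1 g')) (.inr (f2 g')) :=
      joinGraph_adj_inl_inr.2 ⟨g', rfl, rfl⟩
    have hzw : (joinGraph G1 G2 G f1 f2).Adj (.inr (f2 g)) (.inr (f2 g')) :=
      joinGraph_adj_inr_inr.2 (hom2 g g' hgg')
    exact ⟨_, by simp, by simp, hzw.ne', hyw, hzw, ⟨hxy, hzw, by simp⟩, ⟨hxz, hyw, by simp⟩⟩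
  · obtain ⟨g, rfl, rfl⟩ := joinGraph_adj_inr_inl.1 hxz
    obtain ⟨g', hgg', rfl⟩ := hsurj2 g b (joinGraph_adj_inr_inr.1 hxy)
    have hyw : (joinGraph G1 G2 G f1 f2).Adj (.inr (f2 g')) (.inl (f1 g')) :=
      joinGraph_adj_inr_inl.2 ⟨g', rfl, rfl⟩
    have hzw : (joinGraph G1 G2 G f1 f2).Adj (.inl (f1 g)) (.inl (f1 g')) :=
      joinGraph_adj_inl_inl.2 (hom1 g g' hgg')
    exact ⟨_, by simp, by simp, hzw.ne', hyw, hzw, ⟨hxy, hzw, by simp⟩, ⟨hxz, hyw, by simp⟩⟩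

end JoinGraph

/-- Connecting `G₁` and `G₂` along two locally surjective homomorphisms `f₁ : G → G₁`,
`f₂ : G → G₂` yields a graph `H` on which the two-class relation with classes
`φ = E(G₁) ∪ E(G₂)` and `φ̄` (the connecting edges) is an RSP-relation. -/
theorem stmt15 {V1 V2 W : Type*} (G1 : SimpleGraph V1) (G2 : SimpleGraph V2)
    (G : SimpleGraph W) (f1 : W → V1) (f2 : W → V2)
    (hom1 : ∀ g g', G.Adj g g' → G1.Adj (f1 g) (f1 g'))
    (hom2 : ∀ g g', G.Adj g g' → G2.Adj (f2 g) (f2 g'))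
    (hsurj1 : ∀ g w, G1.Adj (f1 g) w → ∃ g', G.Adj g g' ∧ f1 g' = w)
    (hsurj2 : ∀ g w, G2.Adj (f2 g) w → ∃ g', G.Adj g g' ∧ f2 g' = w) :
    IsRSP (joinGraph G1 G2 G f1 f2) (crossRel (joinGraph G1 G2 G f1 f2)) := by
  refine ⟨isEquivOn_crossRel _, ?_⟩
  rintro x y z hxy hxz - hR
  have hclass : ¬ (pureEdge s(x, y) ↔ pureEdge s(x, z)) := fun h ↦ hR ⟨hxy, hxz, h⟩
  clear hR
  wlog hpure : pureEdge s(x, y) generalizing y z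
  · obtain ⟨w, hwx, hwz, hwy, hzw, hyw, hR₁, hR₂⟩ :=
      this z y hxz hxy (fun h ↦ hclass h.symm) (not_iff.mp hclass |>.mp hpure)
    exact ⟨w, hwx, hwy, hwz, hyw, hzw, hR₂, hR₁⟩
  exact joinGraph_exists_square hom1 hom2 hsurj1 hsurj2 hxy hxz hpure
    (fun h ↦ hclass (iff_of_true hpure h))
end

section
/- Let G and G' be graphs. There exists a graph H with vertex set V(G) ∪ V(G') and a well-behaved RSP-relation R on E(H) with exactly two classes φ = E(G) ∪ E(G') and φ̄ (the edges joining V(G) to V(G')), such that every vertex of V(G) is incident to exactly one φ̄-edge, if and only if G is a covering graph of G'. -/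
open SimpleGraph

variable {V : Type*}

/-!
Let `f` send each vertex of `G` to the far end of its unique connecting edge. For a pure edge and
a connecting edge at a common vertex, the RSP square says exactly that `f` maps edges of `G` to
edges of `G'` and that every edge of `G'` at `f a` lifts to an edge of `G` at `a`. A forbidden
`K_{2,3}` is exactly a pair of distinct lifts of one edge, so well-behavedness is uniqueness of
lifts. Conversely, for a covering map `f`, the graph `G ⊔ G'` with `a` joined to `f a` works.
-/

open Sum

section CrossRel

variable {α β : Type*}

@[simp]
lemma pureEdge_mk_iff {u v : α ⊕ β} : pureEdge s(u, v) ↔ u.isLeft = v.isLeft := by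
  rcases u with a | a <;> rcases v with b | b
  · exact iff_of_true (Or.inl ⟨a, b, rfl⟩) rfl
  · simp [pureEdge]
  · simp [pureEdge]
  · exact iff_of_true (Or.inr ⟨a, b, rfl⟩) rfl

lemma pureEdge_swap {u v : α ⊕ β} : pureEdge s(u, v) ↔ pureEdge s(v, u) := by
  rw [Sym2.eq_swap]

lemma crossRel_isEquivOn (H : SimpleGraph (α ⊕ β)) : IsEquivOn (crossRel H) H.edgeSet where
  refl _ he := ⟨he, he, Iff.rfl⟩
  symm h := ⟨h.2.1, h.1, h.2.2.symm⟩
  trans h h' := ⟨h.1, h'.2.1, h.2.2.trans h'.2.2⟩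
  mem_left h := h.1
  mem_right h := h.2.1

theorem isRSP_crossRel_iff {H : SimpleGraph (α ⊕ β)} :
    IsRSP H (crossRel H) ↔
      ∀ x y z, H.Adj x y → H.Adj x z → pureEdge s(x, y) → ¬ pureEdge s(x, z) →
        ∃ w, H.Adj y w ∧ H.Adj z w ∧ pureEdge s(z, w) ∧ ¬ pureEdge s(y, w) := by
  constructor
  · rintro ⟨-, hsq⟩ x y z hxy hxz hy hz
    have hyz : y ≠ z := by rintro rfl; exact hz hy
    obtain ⟨w, -, -, -, hyw, hzw, hR₁, hR₂⟩ :=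
      hsq x y z hxy hxz hyz fun h => hz (h.2.2.1 hy)
    exact ⟨w, hyw, hzw, hR₁.2.2.1 hy, fun h => hz (hR₂.2.2.2 h)⟩
  · intro hsq
    refine ⟨crossRel_isEquivOn H, fun x y z hxy hxz hyz hR => ?_⟩
    have hne : ¬ (pureEdge s(x, y) ↔ pureEdge s(x, z)) := fun h =>
      hR ⟨hxy, hxz, h⟩
    by_cases hy : pureEdge s(x, y)
    · have hz : ¬ pureEdge s(x, z) := fun hz => hne (iff_of_true hy hz)
      obtain ⟨w, hyw, hzw, hpz, hpy⟩ := hsq x y z hxy hxz hy hz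
      have hwx : w ≠ x := by rintro rfl; exact hz (pureEdge_swap.1 hpz)
      exact ⟨w, hwx, hyw.ne', hzw.ne', hyw, hzw, ⟨hxy, hzw, iff_of_true hy hpz⟩,
        ⟨hxz, hyw, iff_of_false hz hpy⟩⟩
    · have hz : pureEdge s(x, z) := by_contra fun hz => hne (iff_of_false hy hz)
      obtain ⟨w, hzw, hyw, hpy, hpz⟩ := hsq x z y hxz hxy hz hy
      have hwx : w ≠ x := by rintro rfl; exact hy (pureEdge_swap.1 hpy)
      exact ⟨w, hwx, hyw.ne', hzw.ne', hyw, hzw, ⟨hxy, hzw, iff_of_false hy hpz⟩,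
        ⟨hxz, hyw, iff_of_true hz hpy⟩⟩

/-- A forbidden colouring is the pattern below with `(p, q) = (y, x)` or `(x, y)`, according to
whether `[a, x]` is pure or not. -/
theorem wellBehaved_crossRel_iff {H : SimpleGraph (α ⊕ β)} :
    WellBehaved H (crossRel H) ↔
      ∀ p q a b c, H.Adj p a → H.Adj p b → H.Adj p c → H.Adj q a → H.Adj q b → H.Adj q c →
        ¬ pureEdge s(p, a) → pureEdge s(p, b) → ¬ pureEdge s(p, c) →
        pureEdge s(q, a) → ¬ pureEdge s(q, b) → pureEdge s(q, c) → a = c := by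
  constructor
  · intro hWB p q a b c hpa hpb hpc hqa hqb hqc hpa' hpb' hpc' hqa' hqb' hqc'
    by_contra hac
    have hqp : q ≠ p := by rintro rfl; exact hpa' hqa'
    have hab : a ≠ b := by rintro rfl; exact hqb' hqa'
    have hbc : b ≠ c := by rintro rfl; exact hqb' hqc'
    rw [pureEdge_swap] at hpa' hpc' hqa'
    exact hWB ⟨q, p, a, b, c, hqp, hab, hac, hbc, hqa, hqb, hqc, hpa, hpb, hpc,
      ⟨hqa.symm, hqc, iff_of_true hqa' hqc'⟩, ⟨hqa.symm, hpb, iff_of_true hqa' hpb'⟩,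
      fun h => hqb' (h.2.2.1 hqa'), fun h => hpa' (h.2.2.1 hqa'),
      fun h => hpc' (h.2.2.1 hqa')⟩
  · rintro h ⟨x, y, a, b, c, -, -, hac, -, hxa, hxb, hxc, hya, hyb, hyc, h₁, h₂, h₃, h₄, h₅⟩
    have e₁ := h₁.2.2
    have e₂ := h₂.2.2
    have n₁ : ¬ (pureEdge s(a, x) ↔ pureEdge s(x, b)) := fun e => h₃ ⟨hxa.symm, hxb, e⟩
    have n₂ : ¬ (pureEdge s(a, x) ↔ pureEdge s(a, y)) := fun e => h₄ ⟨hxa.symm, hya.symm, e⟩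
    have n₃ : ¬ (pureEdge s(a, x) ↔ pureEdge s(c, y)) := fun e => h₅ ⟨hxa.symm, hyc.symm, e⟩
    rw [pureEdge_swap (u := a) (v := x)] at e₁ e₂ n₁ n₂ n₃
    rw [pureEdge_swap (u := a) (v := y)] at n₂
    rw [pureEdge_swap (u := c) (v := y)] at n₃
    have hcolouring : (pureEdge s(x, a) ∧ pureEdge s(x, c) ∧ pureEdge s(y, b) ∧
          ¬ pureEdge s(y, a) ∧ ¬ pureEdge s(y, c) ∧ ¬ pureEdge s(x, b)) ∨
        (¬ pureEdge s(x, a) ∧ ¬ pureEdge s(x, c) ∧ ¬ pureEdge s(y, b) ∧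
          pureEdge s(y, a) ∧ pureEdge s(y, c) ∧ pureEdge s(x, b)) := by
      clear h h₁ h₂ h₃ h₄ h₅
      tauto
    rcases hcolouring with ⟨hxa', hxc', hyb', hya', hyc', hxb'⟩ | ⟨hxa', hxc', hyb', hya', hyc', hxb'⟩
    · exact hac <| h y x a b c hya hyb hyc hxa hxb hxc hya' hyb' hyc' hxa' hxb' hxc'
    · exact hac <| h x y a b c hxa hxb hxc hya hyb hyc hxa' hxb' hxc' hya' hyb' hyc'

end CrossRel

section CrossEdgeFunction

variable {α β : Type*} {H : SimpleGraph (α ⊕ β)} {f : α → β}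

theorem isRSP_crossRel_iff_of_adj_inl_inr (hf : ∀ a b, H.Adj (inl a) (inr b) ↔ f a = b) :
    IsRSP H (crossRel H) ↔
      (∀ a b, H.Adj (inl a) (inl b) → H.Adj (inr (f a)) (inr (f b))) ∧
      ∀ a w, H.Adj (inr (f a)) (inr w) → ∃ b, H.Adj (inl a) (inl b) ∧ f b = w := by
  rw [isRSP_crossRel_iff]
  constructor
  · intro hsq
    refine ⟨fun a b hab => ?_, fun a w haw => ?_⟩
    · obtain ⟨_ | d, hbd, had, hpd, -⟩ :=
        hsq (inl a) (inl b) (inr (f a)) hab ((hf a _).2 rfl) (by simp) (by simp)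
      · simp at hpd
      · obtain rfl := (hf b d).1 hbd
        exact had
    · obtain ⟨_ | d, hwd, had, hpd, -⟩ :=
        hsq (inr (f a)) (inr w) (inl a) haw ((hf a _).2 rfl).symm (by simp) (by simp)
      · exact ⟨_, had, (hf _ w).1 hwd.symm⟩
      · simp at hpd
  · rintro ⟨hmap, hlift⟩ (a | a) (b | b) (c | c) hxy hxz hy hz <;> simp at hy hz
    · obtain rfl := (hf a c).1 hxz
      exact ⟨inr (f b), (hf b _).2 rfl, hmap a b hxy, by simp, by simp⟩
    · obtain rfl := (hf c a).1 hxz.symm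
      obtain ⟨d, hcd, rfl⟩ := hlift c b hxy
      exact ⟨inl d, ((hf d _).2 rfl).symm, hcd, by simp, by simp⟩

theorem wellBehaved_crossRel_iff_of_adj_inl_inr (hf : ∀ a b, H.Adj (inl a) (inr b) ↔ f a = b) :
    WellBehaved H (crossRel H) ↔
      ∀ a w b c, H.Adj (inr (f a)) (inr w) → H.Adj (inl a) (inl b) → H.Adj (inl a) (inl c) →
        f b = w → f c = w → b = c := by
  rw [wellBehaved_crossRel_iff]
  constructor
  · rintro h a w b c haw hab hac rfl hcw
    exact inl_injective <| h (inr (f b)) (inl a) (inl b) (inr (f a)) (inl c)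
      ((hf b _).2 rfl).symm haw.symm ((hf c _).2 hcw).symm hab ((hf a _).2 rfl) hac
      (by simp) (by simp) (by simp) (by simp) (by simp) (by simp)
  · intro h p q a b c hpa hpb hpc hqa hqb hqc hpa' hpb' hpc' hqa' hqb' hqc'
    rcases p with v | v <;> rcases q with u | u <;> rcases a with a | a <;>
      rcases b with b | b <;> rcases c with c | c <;> simp at hpa' hpb' hpc' hqa' hqb' hqc'
    · rw [← (hf v a).1 hpa, ← (hf v c).1 hpc]
    · obtain rfl := (hf u b).1 hqb
      exact congrArg inl <| h u v a c hpb.symm hqa hqc ((hf a v).1 hpa.symm) ((hf c v).1 hpc.symm)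

end CrossEdgeFunction

def joinAlong {α β : Type*} (G : SimpleGraph α) (G' : SimpleGraph β) (f : α → β) :
    SimpleGraph (α ⊕ β) where
  Adj
    | inl a, inl b => G.Adj a b
    | inr a, inr b => G'.Adj a b
    | inl a, inr b => f a = b
    | inr a, inl b => f b = a
  symm := ⟨by
    rintro (a | a) (b | b) h
    exacts [h.symm, h, h, h.symm]⟩
  loopless := ⟨by
    rintro (a | a) h
    exacts [G.irrefl h, G'.irrefl h]⟩

/-- There is a graph `H` on `V(G) ⊕ V(G')` restricting to `G` and `G'` on the two sides,
whose two-class relation (pure edges `φ = E(G) ∪ E(G')` vs. connecting edges `φ̄`) is a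
well-behaved RSP-relation and in which every vertex of `V(G)` is incident to exactly one
connecting edge, if and only if `G` is a covering graph of `G'`. -/
theorem stmt16 {V V' : Type*} (G : SimpleGraph V) (G' : SimpleGraph V') :
    (∃ H : SimpleGraph (V ⊕ V'),
      (∀ a b, H.Adj (Sum.inl a) (Sum.inl b) ↔ G.Adj a b) ∧
      (∀ a b, H.Adj (Sum.inr a) (Sum.inr b) ↔ G'.Adj a b) ∧
      IsRSP H (crossRel H) ∧ WellBehaved H (crossRel H) ∧
      (∀ a : V, ∃! b : V', H.Adj (Sum.inl a) (Sum.inr b))) ↔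
    (∃ f : V → V', (∀ a b, G.Adj a b → G'.Adj (f a) (f b)) ∧
      ∀ a w, G'.Adj (f a) w → ∃! b, G.Adj a b ∧ f b = w) := by
  constructor
  · rintro ⟨H, hG, hG', hRSP, hWB, hcross⟩
    choose f hf hf_unique using hcross
    have hadj_iff : ∀ a b, H.Adj (inl a) (inr b) ↔ f a = b := fun a b =>
      ⟨fun h => (hf_unique a b h).symm, fun h => h ▸ hf a⟩
    obtain ⟨hmap, hlift⟩ := (isRSP_crossRel_iff_of_adj_inl_inr hadj_iff).1 hRSP
    have hunique := (wellBehaved_crossRel_iff_of_adj_inl_inr hadj_iff).1 hWB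
    simp only [hG, hG'] at hmap hlift hunique
    exact ⟨f, hmap, fun a w h => existsUnique_of_exists_of_unique (hlift a w h)
      fun b c hb hc => hunique a w b c h hb.1 hc.1 hb.2 hc.2⟩
  · rintro ⟨f, hmap, hlift⟩
    have hf : ∀ a b, (joinAlong G G' f).Adj (inl a) (inr b) ↔ f a = b := fun _ _ => Iff.rfl
    exact ⟨joinAlong G G' f, fun _ _ => Iff.rfl, fun _ _ => Iff.rfl,
      (isRSP_crossRel_iff_of_adj_inl_inr hf).2 ⟨hmap, fun a w h => (hlift a w h).exists⟩,
      (wellBehaved_crossRel_iff_of_adj_inl_inr hf).2 fun a w b c h hb hc hbw hcw =>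
        (hlift a w h).unique ⟨hb, hbw⟩ ⟨hc, hcw⟩,
      fun a => ⟨f a, rfl, fun _ => Eq.symm⟩⟩
end

section
/- The relation ∼ on the class of finite connected graphs, defined by G₁ ∼ G₂ if and only if G₁ and G₂ have a common finite covering graph, is an equivalence relation; in particular it is transitive: if G₁ and G₂ have a common finite cover, and G₂ and G₃ have a common finite cover, then G₁ and G₃ have a common finite cover. -/
open SimpleGraph

/-- `f` is a covering map from `G` to `H`: a homomorphism that is locally bijective, i.e.,
for each vertex `a`, the neighbors of `a` map bijectively onto the neighbors of `f a`. -/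
def IsCoveringMap' {V W : Type} (G : SimpleGraph V) (H : SimpleGraph W) (f : V → W) : Prop :=
  (∀ a b, G.Adj a b → H.Adj (f a) (f b)) ∧
  ∀ a w, H.Adj (f a) w → ∃! b, G.Adj a b ∧ f b = w

/-- `G` and `H` have a common finite (connected) covering graph. -/
def HasCommonCover {V W : Type} (G : SimpleGraph V) (H : SimpleGraph W) : Prop :=
  ∃ (U : Type) (_ : Fintype U) (K : SimpleGraph U), K.Connected ∧
    (∃ f, IsCoveringMap' K G f) ∧ (∃ g, IsCoveringMap' K H g)

/-!
The connected components of the fibre product of two finite connected covers of a connected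
graph `G` are finite connected graphs covering both (the fibre product is nonempty because a
covering map onto a connected graph is surjective). So if `K₁` covers `G₁` and `G₂`, and `K₂`
covers `G₂` and `G₃`, a component of `K₁ ×_{G₂} K₂` covers `G₁` and `G₃` through `K₁` and `K₂`.
-/

namespace IsCoveringMap'

variable {U V W : Type} {K : SimpleGraph U} {H : SimpleGraph V} {G : SimpleGraph W}

protected lemma id (G : SimpleGraph W) : IsCoveringMap' G G id :=
  ⟨fun _ _ h => h, fun _ w hw => ⟨w, ⟨hw, rfl⟩, fun _ hb => hb.2⟩⟩

lemma comp {g : V → W} {f : U → V} (hg : IsCoveringMap' H G g) (hf : IsCoveringMap' K H f) :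
    IsCoveringMap' K G (g ∘ f) := by
  refine ⟨fun a b hab => hg.1 _ _ (hf.1 _ _ hab), fun a w hw => ?_⟩
  obtain ⟨v, ⟨hav, rfl⟩, hv_unique⟩ := hg.2 (f a) w hw
  obtain ⟨b, ⟨hab, rfl⟩, hb_unique⟩ := hf.2 a v hav
  exact ⟨b, ⟨hab, rfl⟩, fun c hc => hb_unique c ⟨hc.1, hv_unique _ ⟨hf.1 _ _ hc.1, hc.2⟩⟩⟩

lemma of_iso (e : H ≃g G) : IsCoveringMap' H G e :=
  ⟨fun _ _ h => e.map_adj_iff.2 h, fun a w hw =>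
    ⟨e.symm w, ⟨by rw [← e.map_adj_iff]; simpa using hw, by simp⟩, fun b hb => by simp [← hb.2]⟩⟩

lemma surjective {f : U → V} (hf : IsCoveringMap' K H f) (hH : H.Connected) [Nonempty U] :
    Function.Surjective f := by
  intro y
  obtain ⟨a⟩ := ‹Nonempty U›
  suffices ∀ x, H.Walk x y → x ∈ Set.range f → y ∈ Set.range f from
    this _ (hH.preconnected (f a) y).some ⟨a, rfl⟩
  intro x p
  induction p with
  | nil => exact id
  | cons h _ ih =>
    rintro ⟨a, rfl⟩
    obtain ⟨b, ⟨_, hb⟩, _⟩ := hf.2 a _ h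
    exact ih ⟨b, hb⟩

lemma connectedComponent_val (C : G.ConnectedComponent) :
    IsCoveringMap' C.toSimpleGraph G Subtype.val :=
  ⟨fun _ _ h => h, fun a w hw =>
    ⟨⟨w, C.mem_supp_of_adj_mem_supp a.2 hw⟩, ⟨hw, rfl⟩, fun _ hb => Subtype.ext hb.2⟩⟩

end IsCoveringMap'

section FiberProduct

variable {U₁ U₂ V : Type} (K₁ : SimpleGraph U₁) (K₂ : SimpleGraph U₂) (f : U₁ → V) (g : U₂ → V)

def fiberProduct : SimpleGraph {p : U₁ × U₂ // f p.1 = g p.2} where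
  Adj p q := K₁.Adj p.1.1 q.1.1 ∧ K₂.Adj p.1.2 q.1.2
  symm := ⟨fun _ _ h => ⟨h.1.symm, h.2.symm⟩⟩
  loopless := ⟨fun _ h => h.1.ne rfl⟩

def fiberProduct.swapIso : fiberProduct K₁ K₂ f g ≃g fiberProduct K₂ K₁ g f where
  toFun p := ⟨p.1.swap, p.2.symm⟩
  invFun p := ⟨p.1.swap, p.2.symm⟩
  left_inv _ := rfl
  right_inv _ := rfl
  map_rel_iff' := And.comm

variable {K₁ K₂ f g} {G : SimpleGraph V}

lemma isCoveringMap'_fiberProduct_fst (hf : ∀ a b, K₁.Adj a b → G.Adj (f a) (f b))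
    (hg : IsCoveringMap' K₂ G g) : IsCoveringMap' (fiberProduct K₁ K₂ f g) K₁ (·.1.1) := by
  refine ⟨fun _ _ h => h.1, ?_⟩
  rintro ⟨⟨x, y⟩, hxy⟩ x' hxx'
  obtain ⟨y', ⟨hyy', hy'⟩, hy'_unique⟩ := hg.2 y (f x') (hxy ▸ hf x x' hxx')
  refine ⟨⟨(x', y'), hy'.symm⟩, ⟨⟨hxx', hyy'⟩, rfl⟩, ?_⟩
  rintro ⟨⟨_, z⟩, hz⟩ ⟨⟨_, hyz⟩, rfl⟩
  obtain rfl := hy'_unique z ⟨hyz, hz.symm⟩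
  rfl

lemma isCoveringMap'_fiberProduct_snd (hf : IsCoveringMap' K₁ G f)
    (hg : ∀ a b, K₂.Adj a b → G.Adj (g a) (g b)) :
    IsCoveringMap' (fiberProduct K₁ K₂ f g) K₂ (·.1.2) :=
  (isCoveringMap'_fiberProduct_fst hg hf).comp (.of_iso (fiberProduct.swapIso K₁ K₂ f g))

end FiberProduct

namespace HasCommonCover

variable {V₁ V₂ V₃ : Type} {G₁ : SimpleGraph V₁} {G₂ : SimpleGraph V₂} {G₃ : SimpleGraph V₃}

protected lemma refl [Fintype V₁] (hG₁ : G₁.Connected) : HasCommonCover G₁ G₁ :=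
  ⟨V₁, inferInstance, G₁, hG₁, ⟨id, .id G₁⟩, ⟨id, .id G₁⟩⟩

protected lemma symm (h : HasCommonCover G₁ G₂) : HasCommonCover G₂ G₁ :=
  let ⟨U, hU, K, hK, hf, hg⟩ := h
  ⟨U, hU, K, hK, hg, hf⟩

lemma map {U₁ U₂ : Type} {K₁ : SimpleGraph U₁} {K₂ : SimpleGraph U₂}
    {f₁ : U₁ → V₁} {f₂ : U₂ → V₂} (h : HasCommonCover K₁ K₂) (hf₁ : IsCoveringMap' K₁ G₁ f₁)
    (hf₂ : IsCoveringMap' K₂ G₂ f₂) : HasCommonCover G₁ G₂ :=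
  let ⟨U, hU, K, hK, ⟨_, hg₁⟩, ⟨_, hg₂⟩⟩ := h
  ⟨U, hU, K, hK, ⟨_, hf₁.comp hg₁⟩, ⟨_, hf₂.comp hg₂⟩⟩

lemma of_isCoveringMap'_of_connected {U₁ U₂ : Type} [Finite U₁] [Finite U₂] [Nonempty U₁]
    [Nonempty U₂] {K₁ : SimpleGraph U₁} {K₂ : SimpleGraph U₂} {f : U₁ → V₂} {g : U₂ → V₂}
    (hG₂ : G₂.Connected) (hf : IsCoveringMap' K₁ G₂ f) (hg : IsCoveringMap' K₂ G₂ g) :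
    HasCommonCover K₁ K₂ := by
  obtain ⟨x₀⟩ := ‹Nonempty U₁›
  obtain ⟨y₀, hy₀⟩ := hg.surjective hG₂ (f x₀)
  let C := (fiberProduct K₁ K₂ f g).connectedComponentMk ⟨(x₀, y₀), hy₀.symm⟩
  have hι := IsCoveringMap'.connectedComponent_val C
  exact ⟨C, Fintype.ofFinite C, C.toSimpleGraph, C.connected_toSimpleGraph,
    ⟨_, (isCoveringMap'_fiberProduct_fst hf.1 hg).comp hι⟩,
    ⟨_, (isCoveringMap'_fiberProduct_snd hf hg.1).comp hι⟩⟩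

protected lemma trans (h₁₂ : HasCommonCover G₁ G₂) (h₂₃ : HasCommonCover G₂ G₃)
    (hG₂ : G₂.Connected) : HasCommonCover G₁ G₃ := by
  obtain ⟨_, _, _, hK₁, ⟨_, hf₁⟩, ⟨_, hf₂⟩⟩ := h₁₂
  obtain ⟨_, _, _, hK₂, ⟨_, hg₂⟩, ⟨_, hg₃⟩⟩ := h₂₃
  have := hK₁.nonempty
  have := hK₂.nonempty
  exact (of_isCoveringMap'_of_connected hG₂ hf₂ hg₂).map hf₁ hg₃

end HasCommonCover

/-- On finite connected graphs, "having a common finite cover" is reflexive, symmetric and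
transitive, i.e., an equivalence relation. -/
theorem stmt17 :
    (∀ (V1 : Type) (_ : Fintype V1) (G1 : SimpleGraph V1), G1.Connected →
      HasCommonCover G1 G1) ∧
    (∀ (V1 V2 : Type) (_ : Fintype V1) (_ : Fintype V2)
      (G1 : SimpleGraph V1) (G2 : SimpleGraph V2), G1.Connected → G2.Connected →
      HasCommonCover G1 G2 → HasCommonCover G2 G1) ∧
    (∀ (V1 V2 V3 : Type) (_ : Fintype V1) (_ : Fintype V2) (_ : Fintype V3)
      (G1 : SimpleGraph V1) (G2 : SimpleGraph V2) (G3 : SimpleGraph V3),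
      G1.Connected → G2.Connected → G3.Connected →
      HasCommonCover G1 G2 → HasCommonCover G2 G3 → HasCommonCover G1 G3) :=
  ⟨fun _ _ _ hG₁ => .refl hG₁,
    fun _ _ _ _ _ _ _ _ h => h.symm,
    fun _ _ _ _ _ _ _ _ _ _ hG₂ _ h₁₂ h₂₃ => h₁₂.trans h₂₃ hG₂⟩
end

section
/- Let R be an RSP-relation on the edge set of a graph G with exactly two equivalence classes. If R is well-behaved, then for each pair of incident edges [a,b], [a,c] not in relation R there exists a unique (not necessarily chordless) square a−b−d−c with opposite edges in the same classes, i.e., ([a,b],[c,d]) ∈ R and ([a,c],[b,d]) ∈ R. -/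
open SimpleGraph

variable {V : Type*}

/-- For a well-behaved RSP-relation with exactly two classes, any two incident edges in
distinct classes span a *unique* square with opposite edges in the same classes. -/
theorem stmt19 (G : SimpleGraph V) (R : Sym2 V → Sym2 V → Prop) (hR : IsRSP G R)
    (htwo : ∃ e₁ ∈ G.edgeSet, ∃ e₂ ∈ G.edgeSet, ¬ R e₁ e₂ ∧
      ∀ e ∈ G.edgeSet, R e₁ e ∨ R e₂ e)
    (hwb : WellBehaved G R) :
    ∀ a b c : V, G.Adj a b → G.Adj a c → b ≠ c → ¬ R s(a, b) s(a, c) →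
      ∃! d : V, G.Adj b d ∧ G.Adj c d ∧ d ≠ a ∧
        R s(a, b) s(c, d) ∧ R s(a, c) s(b, d) := by
  intro a b c hab hac hbc hnR
  obtain ⟨w, hwa, hwb', hwc, hbw, hcw, hw1, hw2⟩ := hR.2 a b c hab hac hbc hnR
  refine ⟨w, ⟨hbw, hcw, hwa, hw1, hw2⟩, ?_⟩
  rintro d' ⟨hbd', hcd', hd'a, h1, h2⟩
  by_contra hne
  exact hwb ⟨b, c, w, a, d', hbc, hwa, Ne.symm hne, hd'a.symm,
    hbw, hab.symm, hbd', hcw, hac.symm, hcd', by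
      rw [Sym2.eq_swap (a := w)]
      exact hR.1.trans (hR.1.symm hw2) h2, by
      rw [Sym2.eq_swap (a := w), Sym2.eq_swap (a := c)]
      exact hR.1.symm hw2, by
      rw [Sym2.eq_swap (a := w), Sym2.eq_swap (a := b) (b := a)]
      intro h
      exact hnR (hR.1.symm (hR.1.trans hw2 h)), by
      rw [Sym2.eq_swap (a := w) (b := b)]
      intro h
      exact hnR (hR.1.trans (hR.1.trans hw1 (by rw [Sym2.eq_swap (a := c)]; exact hR.1.symm h))
        (hR.1.symm hw2)), by
      rw [Sym2.eq_swap (a := w) (b := b), Sym2.eq_swap (a := d')]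
      intro h
      exact hnR (hR.1.trans (hR.1.trans h1 (hR.1.symm h)) (hR.1.symm hw2))⟩
end
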